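/- arXiv:1705.07113 — 9 statements merged into one kernel-verified Lean document; each statement's English description precedes it below -/
import Mathlib

section
/- Let V be a nonzero finite-dimensional real inner product space, let n be its dimension, and let τ : ℝⁿ → V be a linear isomorphism. Let a : V × V → ℝ be a symmetric positive definite bilinear form. Define the spectral condition number of the stiffness matrix κ(𝔸) = (sup over nonzero c of a(τc,τc)/(c·c)) / (inf over nonzero c of a(τc,τc)/(c·c)), the basis-independent condition number κ(ℐ𝒜) = (sup over nonzero v of a(v,v)/⟨v,v⟩) / (inf over nonzero v of a(v,v)/⟨v,v⟩), and the mass matrix condition number κ(𝕄) = (sup over nonzero c of ⟨τc,τc⟩/(c·c)) / (inf over nonzero c of ⟨τc,τc⟩/(c·c)). Then κ(𝔸) ≤ κ(ℐ𝒜) · κ(𝕄). -/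
open scoped RealInnerProductSpace

section Aux
variable {V : Type*} [NormedAddCommGroup V] [InnerProductSpace ℝ V]
    [FiniteDimensional ℝ V]

theorem aux_cont (a : V →ₗ[ℝ] V →ₗ[ℝ] ℝ) : Continuous fun v : V => a v v := by
  let A : V →L[ℝ] V →L[ℝ] ℝ :=
    LinearMap.toContinuousLinearMap
      ((LinearMap.toContinuousLinearMap : (V →ₗ[ℝ] ℝ) ≃ₗ[ℝ] (V →L[ℝ] ℝ)).toLinearMap ∘ₗ a)
  have h : (fun v : V => a v v) = fun v => A v v := rfl
  rw [h]
  exact A.continuous₂.comp (continuous_id.prodMk continuous_id)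

theorem aux_bounds [Nontrivial V] (a : V →ₗ[ℝ] V →ₗ[ℝ] ℝ)
    (hpos : ∀ v : V, v ≠ 0 → 0 < a v v) :
    ∃ m M : ℝ, 0 < m ∧ ∀ v : V, v ≠ 0 → m ≤ a v v / ⟪v, v⟫ ∧ a v v / ⟪v, v⟫ ≤ M := by
  have hc : IsCompact (Metric.sphere (0:V) 1) := isCompact_sphere _ _
  have hne : (Metric.sphere (0:V) 1).Nonempty := NormedSpace.sphere_nonempty.2 zero_le_one
  obtain ⟨v₀, hv₀, hmin⟩ := hc.exists_isMinOn hne (aux_cont a).continuousOn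
  obtain ⟨v₁, hv₁, hmax⟩ := hc.exists_isMaxOn hne (aux_cont a).continuousOn
  have hv₀n : ‖v₀‖ = 1 := by simpa using hv₀
  have hv₀0 : v₀ ≠ 0 := by intro h; rw [h] at hv₀n; simp at hv₀n
  refine ⟨a v₀ v₀, a v₁ v₁, hpos v₀ hv₀0, fun v hv => ?_⟩
  have hnv : (0:ℝ) < ‖v‖ := norm_pos_iff.2 hv
  set u : V := ‖v‖⁻¹ • v with hu
  have hus : u ∈ Metric.sphere (0:V) 1 := by
    simp [hu, norm_smul, abs_of_pos (inv_pos.2 hnv), inv_mul_cancel₀ hnv.ne']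
  have hq : a u u = ‖v‖⁻¹ * ‖v‖⁻¹ * a v v := by
    simp [hu, map_smul, LinearMap.smul_apply, smul_eq_mul]; ring
  have h1 : a v₀ v₀ ≤ a u u := hmin hus
  have h2 : a u u ≤ a v₁ v₁ := hmax hus
  rw [hq] at h1 h2
  constructor
  · rw [real_inner_self_eq_norm_sq, le_div_iff₀ (by positivity)]
    calc a v₀ v₀ * ‖v‖ ^ 2 ≤ (‖v‖⁻¹ * ‖v‖⁻¹ * a v v) * ‖v‖ ^ 2 :=
          mul_le_mul_of_nonneg_right h1 (by positivity)
      _ = a v v := by rw [sq]; field_simp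
  · rw [real_inner_self_eq_norm_sq, div_le_iff₀ (by positivity)]
    calc a v v = (‖v‖⁻¹ * ‖v‖⁻¹ * a v v) * ‖v‖ ^ 2 := by rw [sq]; field_simp
      _ ≤ a v₁ v₁ * ‖v‖ ^ 2 := mul_le_mul_of_nonneg_right h2 (by positivity)

end Aux

/-- The spectral condition number of the stiffness matrix is bounded by the product of the
basis-independent condition number of the operator and the condition number of the mass
matrix: `κ(𝔸) ≤ κ(ℐ𝒜) · κ(𝕄)`. -/
theorem stmt_2 {V : Type*} [NormedAddCommGroup V] [InnerProductSpace ℝ V]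
    [FiniteDimensional ℝ V] [Nontrivial V]
    {n : ℕ} (hn : n = Module.finrank ℝ V)
    (τ : EuclideanSpace ℝ (Fin n) ≃ₗ[ℝ] V)
    (a : V →ₗ[ℝ] V →ₗ[ℝ] ℝ)
    (hsymm : ∀ u v : V, a u v = a v u)
    (hpos : ∀ v : V, v ≠ 0 → 0 < a v v) :
    (⨆ c : {c : EuclideanSpace ℝ (Fin n) // c ≠ 0},
        a (τ c) (τ c) / ⟪(c : EuclideanSpace ℝ (Fin n)), (c : EuclideanSpace ℝ (Fin n))⟫)
      / (⨅ c : {c : EuclideanSpace ℝ (Fin n) // c ≠ 0},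
          a (τ c) (τ c) / ⟪(c : EuclideanSpace ℝ (Fin n)), (c : EuclideanSpace ℝ (Fin n))⟫)
    ≤ ((⨆ v : {v : V // v ≠ 0}, a v v / ⟪(v : V), (v : V)⟫)
        / (⨅ v : {v : V // v ≠ 0}, a v v / ⟪(v : V), (v : V)⟫))
      * ((⨆ c : {c : EuclideanSpace ℝ (Fin n) // c ≠ 0},
            ⟪τ c, τ c⟫ / ⟪(c : EuclideanSpace ℝ (Fin n)), (c : EuclideanSpace ℝ (Fin n))⟫)
          / (⨅ c : {c : EuclideanSpace ℝ (Fin n) // c ≠ 0},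
              ⟪τ c, τ c⟫ / ⟪(c : EuclideanSpace ℝ (Fin n)), (c : EuclideanSpace ℝ (Fin n))⟫)) := by
  set E := EuclideanSpace ℝ (Fin n)
  haveI : Nontrivial E := τ.toEquiv.nontrivial
  -- the mass bilinear form
  set b : E →ₗ[ℝ] E →ₗ[ℝ] ℝ := LinearMap.mk₂ ℝ (fun c d => ⟪τ c, τ d⟫)
    (fun c c' d => by simp [inner_add_left])
    (fun r c d => by simp [real_inner_smul_left])
    (fun c d d' => by simp [inner_add_right])
    (fun r c d => by simp [real_inner_smul_right]) with hb
  -- the stiffness bilinear form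
  set s : E →ₗ[ℝ] E →ₗ[ℝ] ℝ := a.compl₁₂ τ.toLinearMap τ.toLinearMap with hs
  have hsc : ∀ c : E, s c c = a (τ c) (τ c) := fun c => rfl
  have hbc : ∀ c : E, b c c = ⟪τ c, τ c⟫ := fun c => rfl
  have hτ0 : ∀ c : E, c ≠ 0 → τ c ≠ 0 := fun c hc h =>
    hc (by simpa using congrArg τ.symm h)
  have hbpos : ∀ c : E, c ≠ 0 → 0 < b c c := fun c hc => by
    rw [hbc, real_inner_self_eq_norm_sq]; exact pow_pos (norm_pos_iff.2 (hτ0 c hc)) 2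
  have hspos : ∀ c : E, c ≠ 0 → 0 < s c c := fun c hc => by
    rw [hsc]; exact hpos _ (hτ0 c hc)
  obtain ⟨mg, Mg, hmg, hg⟩ := aux_bounds a hpos
  obtain ⟨mh, Mh, hmh, hh⟩ := aux_bounds b hbpos
  obtain ⟨mf, Mf, hmf, hf⟩ := aux_bounds s hspos
  haveI : Nonempty {v : V // v ≠ 0} := ⟨⟨(exists_ne (0:V)).choose, (exists_ne (0:V)).choose_spec⟩⟩
  haveI : Nonempty {c : E // c ≠ 0} := ⟨⟨(exists_ne (0:E)).choose, (exists_ne (0:E)).choose_spec⟩⟩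
  set Sg := ⨆ v : {v : V // v ≠ 0}, a v v / ⟪(v : V), (v : V)⟫ with hSg
  set Ig := ⨅ v : {v : V // v ≠ 0}, a v v / ⟪(v : V), (v : V)⟫ with hIg
  set Sh := ⨆ c : {c : E // c ≠ 0}, ⟪τ c, τ c⟫ / ⟪(c : E), (c : E)⟫ with hSh
  set Ih := ⨅ c : {c : E // c ≠ 0}, ⟪τ c, τ c⟫ / ⟪(c : E), (c : E)⟫ with hIh
  set Sf := ⨆ c : {c : E // c ≠ 0}, a (τ c) (τ c) / ⟪(c : E), (c : E)⟫ with hSf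
  set If := ⨅ c : {c : E // c ≠ 0}, a (τ c) (τ c) / ⟪(c : E), (c : E)⟫ with hIf
  have hg' : ∀ v : {v : V // v ≠ 0}, mg ≤ a v v / ⟪(v : V), (v : V)⟫ ∧
      a v v / ⟪(v : V), (v : V)⟫ ≤ Mg := fun v => hg v v.2
  have hh' : ∀ c : {c : E // c ≠ 0}, mh ≤ ⟪τ c, τ c⟫ / ⟪(c : E), (c : E)⟫ ∧
      ⟪τ c, τ c⟫ / ⟪(c : E), (c : E)⟫ ≤ Mh := fun c => by
    have := hh c c.2; rwa [hbc] at this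
  have hf' : ∀ c : {c : E // c ≠ 0}, mf ≤ a (τ c) (τ c) / ⟪(c : E), (c : E)⟫ ∧
      a (τ c) (τ c) / ⟪(c : E), (c : E)⟫ ≤ Mf := fun c => by
    have := hf c c.2; rwa [hsc] at this
  have hbddg : BddAbove (Set.range fun v : {v : V // v ≠ 0} => a v v / ⟪(v : V), (v : V)⟫) :=
    ⟨Mg, Set.forall_mem_range.2 fun v => (hg' v).2⟩
  have hbddh : BddAbove (Set.range fun c : {c : E // c ≠ 0} => ⟪τ c, τ c⟫ / ⟪(c : E), (c : E)⟫) :=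
    ⟨Mh, Set.forall_mem_range.2 fun c => (hh' c).2⟩
  have hbddg' : BddBelow (Set.range fun v : {v : V // v ≠ 0} => a v v / ⟪(v : V), (v : V)⟫) :=
    ⟨mg, Set.forall_mem_range.2 fun v => (hg' v).1⟩
  have hbddh' : BddBelow (Set.range fun c : {c : E // c ≠ 0} => ⟪τ c, τ c⟫ / ⟪(c : E), (c : E)⟫) :=
    ⟨mh, Set.forall_mem_range.2 fun c => (hh' c).1⟩
  have hIgpos : 0 < Ig := lt_of_lt_of_le hmg (le_ciInf fun v => (hg' v).1)
  have hIhpos : 0 < Ih := lt_of_lt_of_le hmh (le_ciInf fun c => (hh' c).1)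
  have hSgpos : 0 < Sg := lt_of_lt_of_le hmg ((hg' (Classical.arbitrary _)).1.trans (le_ciSup hbddg _))
  have hShpos : 0 < Sh := lt_of_lt_of_le hmh ((hh' (Classical.arbitrary _)).1.trans (le_ciSup hbddh _))
  -- factorization f c = g (τ c) * h c
  have hfact : ∀ c : {c : E // c ≠ 0},
      a (τ c) (τ c) / ⟪(c : E), (c : E)⟫
        = (a (τ c) (τ c) / ⟪τ (c : E), τ (c : E)⟫) * (⟪τ (c : E), τ (c : E)⟫ / ⟪(c : E), (c : E)⟫) := by
    intro c
    have h1 : ⟪τ (c : E), τ (c : E)⟫ ≠ 0 := by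
      rw [real_inner_self_eq_norm_sq]
      exact (pow_pos (norm_pos_iff.2 (hτ0 c c.2)) 2).ne'
    field_simp
  have hSfle : Sf ≤ Sg * Sh := by
    apply ciSup_le
    intro c
    rw [hfact c]
    have h1 : a (τ c) (τ c) / ⟪τ (c : E), τ (c : E)⟫ ≤ Sg :=
      le_ciSup hbddg (⟨τ c, hτ0 c c.2⟩ : {v : V // v ≠ 0})
    have h2 : ⟪τ (c : E), τ (c : E)⟫ / ⟪(c : E), (c : E)⟫ ≤ Sh := le_ciSup hbddh c
    have h3 : 0 ≤ ⟪τ (c : E), τ (c : E)⟫ / ⟪(c : E), (c : E)⟫ :=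
      le_trans hmh.le (hh' c).1
    exact mul_le_mul h1 h2 h3 hSgpos.le
  have hIfge : Ig * Ih ≤ If := by
    apply le_ciInf
    intro c
    rw [hfact c]
    have h1 : Ig ≤ a (τ c) (τ c) / ⟪τ (c : E), τ (c : E)⟫ :=
      ciInf_le hbddg' (⟨τ c, hτ0 c c.2⟩ : {v : V // v ≠ 0})
    have h2 : Ih ≤ ⟪τ (c : E), τ (c : E)⟫ / ⟪(c : E), (c : E)⟫ := ciInf_le hbddh' c
    have h3 : 0 ≤ a (τ c) (τ c) / ⟪τ (c : E), τ (c : E)⟫ := le_trans hIgpos.le h1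
    exact mul_le_mul h1 h2 hIhpos.le h3
  rw [div_mul_div_comm]
  exact div_le_div₀ (by positivity) hSfle (by positivity) hIfge
end

section
/- Let W be a nonzero finite-dimensional real inner product space and let W₁, …, W_J be subspaces with W = W₁ + ⋯ + W_J. Assume there is a constant b > 0 such that every u ∈ W admits a decomposition u = u₁ + ⋯ + u_J with uⱼ ∈ Wⱼ and Σⱼ ‖uⱼ‖² ≤ b‖u‖². For each j, let φ_{j,1}, …, φ_{j,N_j} be a basis of Wⱼ and let αⱼ > 0 satisfy αⱼ Σₖ c_{j,k}² ≤ ‖Σₖ c_{j,k} φ_{j,k}‖² for all coefficients (c_{j,k})ₖ. Then every u ∈ W admits a family of coefficients c = (c_{j,k}) with u = Σ_{j,k} c_{j,k} φ_{j,k} and (minⱼ αⱼ) Σ_{j,k} c_{j,k}² ≤ b ‖u‖². In particular, the lower frame constant α(Φ) of the frame Φ = {φ_{j,k}} satisfies α(Φ) ≥ b⁻¹ minⱼ αⱼ. -/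
open scoped RealInnerProductSpace

/-- The set of squared `ℓ²`-norms of coefficient vectors representing `u` in the family `Φ`. -/
def repSquares {W : Type*} [NormedAddCommGroup W] [InnerProductSpace ℝ W]
    {ι : Type*} [Fintype ι] (Φ : ι → W) (u : W) : Set ℝ :=
  {s : ℝ | ∃ c : ι → ℝ, u = ∑ i, c i • Φ i ∧ s = ∑ i, (c i) ^ 2}

/-- The optimal lower frame constant
`α(Φ) = inf_{u ≠ 0} ‖u‖² / inf{Σ cᵢ² : u = Σ cᵢ φᵢ}`. -/
noncomputable def frameLower {W : Type*} [NormedAddCommGroup W] [InnerProductSpace ℝ W]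
    {ι : Type*} [Fintype ι] (Φ : ι → W) : ℝ :=
  ⨅ u : {u : W // u ≠ 0}, ‖(u : W)‖ ^ 2 / sInf (repSquares Φ (u : W))

/-- If the subspace decomposition admits stable splittings with constant `b`, and every local
basis satisfies the lower bound with constant `αⱼ`, then every `u ∈ W` admits coefficients `c`
with `u = Σ c_{j,k} φ_{j,k}` and `(minⱼ αⱼ) Σ c_{j,k}² ≤ b ‖u‖²`; in particular the lower
frame constant of the combined frame is at least `b⁻¹ minⱼ αⱼ`. -/
theorem stmt_4 {W : Type*} [NormedAddCommGroup W] [InnerProductSpace ℝ W]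
    [FiniteDimensional ℝ W] [Nontrivial W]
    {J : ℕ} (hJ : 0 < J) (Wsub : Fin J → Submodule ℝ W)
    (hsum : (⨆ j, Wsub j) = ⊤)
    (b : ℝ) (hb : 0 < b)
    (hdec : ∀ u : W, ∃ v : Fin J → W, (∀ j, v j ∈ Wsub j) ∧ u = ∑ j, v j ∧
      ∑ j, ‖v j‖ ^ 2 ≤ b * ‖u‖ ^ 2)
    (N : Fin J → ℕ) (φ : (j : Fin J) → Fin (N j) → W)
    (hmem : ∀ j k, φ j k ∈ Wsub j)
    (hli : ∀ j, LinearIndependent ℝ (φ j))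
    (hspan : ∀ j, Submodule.span ℝ (Set.range (φ j)) = Wsub j)
    (α : Fin J → ℝ) (hα : ∀ j, 0 < α j)
    (hlo : ∀ j, ∀ c : Fin (N j) → ℝ,
      α j * ∑ k, (c k) ^ 2 ≤ ‖∑ k, c k • φ j k‖ ^ 2) :
    (∀ u : W, ∃ c : (j : Fin J) → Fin (N j) → ℝ,
        u = ∑ j, ∑ k, c j k • φ j k ∧
        (⨅ j, α j) * (∑ j, ∑ k, (c j k) ^ 2) ≤ b * ‖u‖ ^ 2)
    ∧ b⁻¹ * (⨅ j, α j) ≤ frameLower (fun p : Σ j : Fin J, Fin (N j) => φ p.1 p.2) := by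
  classical
  have : Nonempty (Fin J) := ⟨⟨0, hJ⟩⟩
  set m := ⨅ j, α j with hm
  have hm_le : ∀ j, m ≤ α j := fun j => ciInf_le (Set.Finite.bddBelow (Set.finite_range α)) j
  obtain ⟨j0, hj0⟩ := Finite.exists_min α
  have hm_pos : 0 < m := lt_of_lt_of_le (hα j0) (le_ciInf hj0)
  have key : ∀ u : W, ∃ c : (j : Fin J) → Fin (N j) → ℝ,
      u = ∑ j, ∑ k, c j k • φ j k ∧
      m * (∑ j, ∑ k, (c j k) ^ 2) ≤ b * ‖u‖ ^ 2 := by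
    intro u
    obtain ⟨v, hv, huv, hnorm⟩ := hdec u
    have hrep : ∀ j, ∃ c : Fin (N j) → ℝ, (∑ k, c k • φ j k) = v j := by
      intro j
      have h1 : v j ∈ Submodule.span ℝ (Set.range (φ j)) := by rw [hspan j]; exact hv j
      exact (Submodule.mem_span_range_iff_exists_fun ℝ).1 h1
    choose c hc using hrep
    refine ⟨c, ?_, ?_⟩
    · rw [huv]; exact (Finset.sum_congr rfl fun j _ => (hc j)).symm
    · calc m * ∑ j, ∑ k, (c j k) ^ 2 = ∑ j, m * ∑ k, (c j k) ^ 2 := Finset.mul_sum _ _ _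
        _ ≤ ∑ j, α j * ∑ k, (c j k) ^ 2 := by
            refine Finset.sum_le_sum fun j _ => mul_le_mul_of_nonneg_right (hm_le j) ?_
            exact Finset.sum_nonneg fun k _ => sq_nonneg _
        _ ≤ ∑ j, ‖v j‖ ^ 2 := by
            refine Finset.sum_le_sum fun j _ => ?_
            have := hlo j (c j)
            rwa [hc j] at this
        _ ≤ b * ‖u‖ ^ 2 := hnorm
  refine ⟨key, ?_⟩
  set Φ := fun p : Σ j : Fin J, Fin (N j) => φ p.1 p.2 with hΦ
  have : Nonempty {u : W // u ≠ 0} := by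
    obtain ⟨x, hx⟩ := exists_ne (0:W)
    exact ⟨⟨x, hx⟩⟩
  refine le_ciInf ?_
  rintro ⟨u, hu⟩
  have hu2 : 0 < ‖u‖ ^ 2 := pow_pos (norm_pos_iff.mpr hu) 2
  obtain ⟨c, hcu, hcle⟩ := key u
  set S := repSquares Φ u with hS
  have hmemS : (∑ j, ∑ k, (c j k) ^ 2) ∈ S := by
    refine ⟨fun p => c p.1 p.2, ?_, ?_⟩
    · rw [hcu, ← Finset.univ_sigma_univ, Finset.sum_sigma]
    · rw [← Finset.univ_sigma_univ, Finset.sum_sigma]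
  -- upper bound B for Cauchy-Schwarz
  set B := ∑ p : Σ j : Fin J, Fin (N j), ‖Φ p‖ ^ 2 with hB
  have hCS : ∀ s ∈ S, ‖u‖ ^ 2 ≤ s * B := by
    rintro s ⟨d, hd, rfl⟩
    calc ‖u‖ ^ 2 ≤ (∑ p, |d p| * ‖Φ p‖) ^ 2 := by
          refine pow_le_pow_left₀ (norm_nonneg _) ?_ 2
          rw [hd]
          refine (norm_sum_le _ _).trans (le_of_eq ?_)
          exact Finset.sum_congr rfl fun p _ => by rw [norm_smul, Real.norm_eq_abs]
      _ ≤ (∑ p, |d p| ^ 2) * ∑ p, ‖Φ p‖ ^ 2 :=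
          Finset.sum_mul_sq_le_sq_mul_sq _ _ _
      _ = (∑ p, (d p) ^ 2) * B := by simp [sq_abs, hB]
  have hBpos : 0 < B := by
    by_contra h
    push_neg at h
    have := hCS _ hmemS
    have hs0 : (0:ℝ) ≤ ∑ j, ∑ k, (c j k) ^ 2 :=
      Finset.sum_nonneg fun j _ => Finset.sum_nonneg fun k _ => sq_nonneg _
    nlinarith
  have hSlb : ∀ s ∈ S, ‖u‖ ^ 2 / B ≤ s := by
    intro s hs
    rw [div_le_iff₀ hBpos]
    exact hCS s hs
  have hSbdd : BddBelow S := ⟨_, hSlb⟩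
  have hInf_pos : 0 < sInf S := lt_of_lt_of_le (by positivity) (le_csInf ⟨_, hmemS⟩ hSlb)
  have hInf_le : sInf S ≤ ∑ j, ∑ k, (c j k) ^ 2 := csInf_le hSbdd hmemS
  rw [le_div_iff₀ hInf_pos]
  calc b⁻¹ * m * sInf S = b⁻¹ * (m * sInf S) := by ring
    _ ≤ b⁻¹ * (m * ∑ j, ∑ k, (c j k) ^ 2) := by
        refine mul_le_mul_of_nonneg_left (mul_le_mul_of_nonneg_left hInf_le hm_pos.le) (by positivity)
    _ ≤ b⁻¹ * (b * ‖u‖ ^ 2) := mul_le_mul_of_nonneg_left hcle (by positivity)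
    _ = ‖u‖ ^ 2 := by field_simp
end

section
/- Let W be a nonzero finite-dimensional real inner product space and let W₁, …, W_J be subspaces with W = W₁ + ⋯ + W_J. Assume there are constants a, b > 0 such that (i) a‖u₁ + ⋯ + u_J‖² ≤ Σⱼ ‖uⱼ‖² for all choices uⱼ ∈ Wⱼ, and (ii) every u ∈ W admits a decomposition u = u₁ + ⋯ + u_J with uⱼ ∈ Wⱼ and Σⱼ ‖uⱼ‖² ≤ b‖u‖². For each j, let φ_{j,1}, …, φ_{j,N_j} be a basis of Wⱼ and let 0 < αⱼ ≤ βⱼ satisfy αⱼ Σₖ c_{j,k}² ≤ ‖Σₖ c_{j,k} φ_{j,k}‖² ≤ βⱼ Σₖ c_{j,k}² for all coefficients. Set 𝒦ⱼ = βⱼ/αⱼ. Then the frame condition number 𝒦(Φ) = β(Φ)/α(Φ) of the frame Φ = {φ_{j,k}}_{j,k} satisfies 𝒦(Φ) ≤ a⁻¹ b (max_{1≤j≤J} 𝒦ⱼ) · max_{1≤j,l≤J} (αⱼ/α_l). -/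
open scoped RealInnerProductSpace

/-- The optimal upper frame constant
`β(Φ) = sup_{u ≠ 0} ‖u‖² / inf{Σ cᵢ² : u = Σ cᵢ φᵢ}`. -/
noncomputable def frameUpper {W : Type*} [NormedAddCommGroup W] [InnerProductSpace ℝ W]
    {ι : Type*} [Fintype ι] (Φ : ι → W) : ℝ :=
  ⨆ u : {u : W // u ≠ 0}, ‖(u : W)‖ ^ 2 / sInf (repSquares Φ (u : W))

private lemma sigma_sum_aux {J : ℕ} {N : Fin J → ℕ} {M : Type*} [AddCommMonoid M]
    (f : (Σ j : Fin J, Fin (N j)) → M) :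
    ∑ p, f p = ∑ j, ∑ k, f ⟨j, k⟩ := by
  rw [← Finset.univ_sigma_univ, Finset.sum_sigma]

/-- For a frame obtained from a stable space decomposition `W = W₁ + ⋯ + W_J`, with local
bases having bounds `αⱼ, βⱼ`, the frame condition number `𝒦(Φ) = β(Φ)/α(Φ)` satisfies
`𝒦(Φ) ≤ a⁻¹ b (maxⱼ 𝒦ⱼ) max_{j,l} (αⱼ/α_l)`. -/
theorem stmt_5 {W : Type*} [NormedAddCommGroup W] [InnerProductSpace ℝ W]
    [FiniteDimensional ℝ W] [Nontrivial W]
    {J : ℕ} (hJ : 0 < J) (Wsub : Fin J → Submodule ℝ W)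
    (hsum : (⨆ j, Wsub j) = ⊤)
    (a b : ℝ) (ha : 0 < a) (hb : 0 < b)
    (hlow : ∀ u : Fin J → W, (∀ j, u j ∈ Wsub j) →
      a * ‖∑ j, u j‖ ^ 2 ≤ ∑ j, ‖u j‖ ^ 2)
    (hdec : ∀ u : W, ∃ v : Fin J → W, (∀ j, v j ∈ Wsub j) ∧ u = ∑ j, v j ∧
      ∑ j, ‖v j‖ ^ 2 ≤ b * ‖u‖ ^ 2)
    (N : Fin J → ℕ) (φ : (j : Fin J) → Fin (N j) → W)
    (hmem : ∀ j k, φ j k ∈ Wsub j)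
    (hli : ∀ j, LinearIndependent ℝ (φ j))
    (hspan : ∀ j, Submodule.span ℝ (Set.range (φ j)) = Wsub j)
    (α β : Fin J → ℝ) (hα : ∀ j, 0 < α j) (hαβ : ∀ j, α j ≤ β j)
    (hbounds : ∀ j, ∀ c : Fin (N j) → ℝ,
      α j * ∑ k, (c k) ^ 2 ≤ ‖∑ k, c k • φ j k‖ ^ 2 ∧
      ‖∑ k, c k • φ j k‖ ^ 2 ≤ β j * ∑ k, (c k) ^ 2) :
    frameUpper (fun p : Σ j : Fin J, Fin (N j) => φ p.1 p.2)
      / frameLower (fun p : Σ j : Fin J, Fin (N j) => φ p.1 p.2)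
    ≤ a⁻¹ * b * (⨆ j, β j / α j) * ⨆ j, ⨆ l, α j / α l := by
  classical
  haveI : Nonempty (Fin J) := ⟨⟨0, hJ⟩⟩
  obtain ⟨w0, hw0⟩ := exists_ne (0 : W)
  haveI : Nonempty {u : W // u ≠ 0} := ⟨⟨w0, hw0⟩⟩
  set Φ : (Σ j : Fin J, Fin (N j)) → W := fun p => φ p.1 p.2 with hΦ
  have hβ : ∀ j, 0 < β j := fun j => (hα j).trans_le (hαβ j)
  obtain ⟨j0, -, hj0⟩ := Finset.exists_max_image Finset.univ β ⟨⟨0, hJ⟩, Finset.mem_univ _⟩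
  obtain ⟨l0, -, hl0⟩ := Finset.exists_min_image Finset.univ α ⟨⟨0, hJ⟩, Finset.mem_univ _⟩
  simp only [Finset.mem_univ, forall_true_left, true_implies] at hj0 hl0
  have key : ∀ u : W, u ≠ 0 →
      α l0 / b ≤ ‖u‖ ^ 2 / sInf (repSquares Φ u) ∧
      ‖u‖ ^ 2 / sInf (repSquares Φ u) ≤ β j0 / a := by
    intro u hu
    have hnu : 0 < ‖u‖ ^ 2 := pow_pos (norm_pos_iff.mpr hu) 2
    have hbdd : BddBelow (repSquares Φ u) := by
      refine ⟨0, ?_⟩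
      rintro s ⟨c, -, rfl⟩
      positivity
    -- construct a representation from the decomposition
    obtain ⟨v, hv, huv, hvb⟩ := hdec u
    have hvj : ∀ j, ∃ d : Fin (N j) → ℝ, ∑ k, d k • φ j k = v j := by
      intro j
      exact (Submodule.mem_span_range_iff_exists_fun ℝ).mp ((hspan j) ▸ hv j)
    choose d hd using hvj
    set c : (Σ j : Fin J, Fin (N j)) → ℝ := fun p => d p.1 p.2 with hc
    have hrep : u = ∑ p, c p • Φ p := by
      rw [sigma_sum_aux (fun p => c p • Φ p)]
      simp only [hc, hΦ]
      rw [huv]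
      exact Finset.sum_congr rfl fun j _ => (hd j).symm
    have hmem' : (∑ p, (c p) ^ 2) ∈ repSquares Φ u := ⟨c, hrep, rfl⟩
    have hne : (repSquares Φ u).Nonempty := ⟨_, hmem'⟩
    have hsum_le : ∑ p, (c p) ^ 2 ≤ b / α l0 * ‖u‖ ^ 2 := by
      have h1 : ∀ j, ∑ k, (d j k) ^ 2 ≤ ‖v j‖ ^ 2 / α l0 := by
        intro j
        have h2 := (hbounds j (d j)).1
        rw [hd j] at h2
        rw [le_div_iff₀ (hα l0)]
        calc (∑ k, (d j k) ^ 2) * α l0 = α l0 * ∑ k, (d j k) ^ 2 := mul_comm _ _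
          _ ≤ α j * ∑ k, (d j k) ^ 2 := by
              apply mul_le_mul_of_nonneg_right (hl0 j)
              positivity
          _ ≤ ‖v j‖ ^ 2 := h2
      calc ∑ p, (c p) ^ 2 = ∑ j, ∑ k, (d j k) ^ 2 := sigma_sum_aux _
        _ ≤ ∑ j, ‖v j‖ ^ 2 / α l0 := Finset.sum_le_sum fun j _ => h1 j
        _ = (∑ j, ‖v j‖ ^ 2) / α l0 := by rw [Finset.sum_div]
        _ ≤ (b * ‖u‖ ^ 2) / α l0 := by
            exact div_le_div_of_nonneg_right hvb (hα l0).le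
        _ = b / α l0 * ‖u‖ ^ 2 := by ring
    have hInf_le : sInf (repSquares Φ u) ≤ b / α l0 * ‖u‖ ^ 2 :=
      (csInf_le hbdd hmem').trans hsum_le
    -- lower bound on all representations
    have hlb : ∀ s ∈ repSquares Φ u, a / β j0 * ‖u‖ ^ 2 ≤ s := by
      rintro s ⟨e, hrepe, rfl⟩
      set w : Fin J → W := fun j => ∑ k, e ⟨j, k⟩ • φ j k with hw
      have hwmem : ∀ j, w j ∈ Wsub j := by
        intro j
        exact Submodule.sum_mem _ fun k _ => Submodule.smul_mem _ _ (hmem j k)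
      have hwsum : ∑ j, w j = u := by
        rw [hrepe, sigma_sum_aux (fun p => e p • Φ p)]
      have h3 : a * ‖u‖ ^ 2 ≤ ∑ j, ‖w j‖ ^ 2 := by
        have := hlow w hwmem
        rwa [hwsum] at this
      have h4 : ∑ j, ‖w j‖ ^ 2 ≤ β j0 * ∑ p, (e p) ^ 2 := by
        rw [sigma_sum_aux (fun p => (e p) ^ 2), Finset.mul_sum]
        refine Finset.sum_le_sum fun j _ => ?_
        calc ‖w j‖ ^ 2 ≤ β j * ∑ k, (e ⟨j, k⟩) ^ 2 := (hbounds j _).2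
          _ ≤ β j0 * ∑ k, (e ⟨j, k⟩) ^ 2 := by
              apply mul_le_mul_of_nonneg_right (hj0 j)
              positivity
      rw [div_mul_eq_mul_div, div_le_iff₀ (hβ j0)]
      nlinarith [h3.trans h4]
    have hle_Inf : a / β j0 * ‖u‖ ^ 2 ≤ sInf (repSquares Φ u) := le_csInf hne hlb
    have hSpos : 0 < sInf (repSquares Φ u) :=
      lt_of_lt_of_le (mul_pos (div_pos ha (hβ j0)) hnu) hle_Inf
    constructor
    · rw [le_div_iff₀ hSpos]
      calc α l0 / b * sInf (repSquares Φ u) ≤ α l0 / b * (b / α l0 * ‖u‖ ^ 2) := by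
            exact mul_le_mul_of_nonneg_left hInf_le (div_pos (hα l0) hb).le
        _ = ‖u‖ ^ 2 := by field_simp [(hα l0).ne', hb.ne']
    · rw [div_le_iff₀ hSpos]
      calc ‖u‖ ^ 2 = β j0 / a * (a / β j0 * ‖u‖ ^ 2) := by field_simp [(hβ j0).ne', ha.ne']
        _ ≤ β j0 / a * sInf (repSquares Φ u) := by
            exact mul_le_mul_of_nonneg_left hle_Inf (div_pos (hβ j0) ha).le
  -- bound the frame constants
  have hupper : frameUpper Φ ≤ β j0 / a :=
    ciSup_le fun u => (key u u.2).2
  have hlower : α l0 / b ≤ frameLower Φ :=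
    le_ciInf fun u => (key u u.2).1
  have hlbpos : 0 < α l0 / b := div_pos (hα l0) hb
  have hdivle : frameUpper Φ / frameLower Φ ≤ (β j0 / a) / (α l0 / b) :=
    div_le_div₀ (div_pos (hβ j0) ha).le hupper hlbpos hlower
  -- bound the ratio by the sups
  have hKbdd : BddAbove (Set.range fun j => β j / α j) :=
    Set.Finite.bddAbove (Set.finite_range _)
  have hK : β j0 / α j0 ≤ ⨆ j, β j / α j := le_ciSup hKbdd j0
  have hR1 : α j0 / α l0 ≤ ⨆ l, α j0 / α l :=
    le_ciSup (f := fun l => α j0 / α l) (Set.Finite.bddAbove (Set.finite_range _)) l0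
  have hR2 : (⨆ l, α j0 / α l) ≤ ⨆ j, ⨆ l, α j / α l :=
    le_ciSup (Set.Finite.bddAbove (Set.finite_range (fun j => ⨆ l, α j / α l))) j0
  have hR : α j0 / α l0 ≤ ⨆ j, ⨆ l, α j / α l := hR1.trans hR2
  have hKnn : 0 ≤ ⨆ j, β j / α j := le_trans (div_pos (hβ j0) (hα j0)).le hK
  have hratio : β j0 / α l0 ≤ (⨆ j, β j / α j) * ⨆ j, ⨆ l, α j / α l := by
    have h1 : β j0 / α l0 = (β j0 / α j0) * (α j0 / α l0) := by
      rw [div_mul_div_comm, mul_comm (α j0) (α l0), mul_div_mul_right _ _ (hα j0).ne']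
    rw [h1]
    exact mul_le_mul hK hR (div_pos (hα j0) (hα l0)).le hKnn
  calc frameUpper Φ / frameLower Φ ≤ (β j0 / a) / (α l0 / b) := hdivle
    _ = a⁻¹ * b * (β j0 / α l0) := by field_simp
    _ ≤ a⁻¹ * b * ((⨆ j, β j / α j) * ⨆ j, ⨆ l, α j / α l) := by
        exact mul_le_mul_of_nonneg_left hratio (mul_pos (inv_pos.mpr ha) hb).le
    _ = a⁻¹ * b * (⨆ j, β j / α j) * ⨆ j, ⨆ l, α j / α l := by ring
end

section
/- Let W be a nonzero finite-dimensional real inner product space and let W₁, …, W_J be subspaces with W = W₁ + ⋯ + W_J. Assume there are constants a, b > 0 such that (i) a‖u₁ + ⋯ + u_J‖² ≤ Σⱼ ‖uⱼ‖² for all choices uⱼ ∈ Wⱼ, and (ii) every u ∈ W admits a decomposition u = u₁ + ⋯ + u_J with uⱼ ∈ Wⱼ and Σⱼ ‖uⱼ‖² ≤ b‖u‖². For each j, let φ_{j,1}, …, φ_{j,N_j} be a basis of Wⱼ, and assume there are uniform constants 0 < α₀ ≤ β₀, independent of j, such that α₀ Σₖ c_{j,k}² ≤ ‖Σₖ c_{j,k}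 φ_{j,k}‖² ≤ β₀ Σₖ c_{j,k}² for all j and all coefficients. Then the frame condition number of Φ = {φ_{j,k}}_{j,k} satisfies 𝒦(Φ) ≤ a⁻¹ b (β₀/α₀)². -/
open scoped RealInnerProductSpace

/-- For a frame obtained from a stable space decomposition `W = W₁ + ⋯ + W_J`, with local
bases that are uniformly well-conditioned with constants `α₀ ≤ β₀`, the frame condition
number satisfies `𝒦(Φ) ≤ a⁻¹ b (β₀/α₀)²`. -/
theorem stmt_6 {W : Type*} [NormedAddCommGroup W] [InnerProductSpace ℝ W]
    [FiniteDimensional ℝ W] [Nontrivial W]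
    {J : ℕ} (hJ : 0 < J) (Wsub : Fin J → Submodule ℝ W)
    (hsum : (⨆ j, Wsub j) = ⊤)
    (a b : ℝ) (ha : 0 < a) (hb : 0 < b)
    (hlow : ∀ u : Fin J → W, (∀ j, u j ∈ Wsub j) →
      a * ‖∑ j, u j‖ ^ 2 ≤ ∑ j, ‖u j‖ ^ 2)
    (hdec : ∀ u : W, ∃ v : Fin J → W, (∀ j, v j ∈ Wsub j) ∧ u = ∑ j, v j ∧
      ∑ j, ‖v j‖ ^ 2 ≤ b * ‖u‖ ^ 2)
    (N : Fin J → ℕ) (φ : (j : Fin J) → Fin (N j) → W)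
    (hmem : ∀ j k, φ j k ∈ Wsub j)
    (hli : ∀ j, LinearIndependent ℝ (φ j))
    (hspan : ∀ j, Submodule.span ℝ (Set.range (φ j)) = Wsub j)
    (α₀ β₀ : ℝ) (hα₀ : 0 < α₀) (hαβ : α₀ ≤ β₀)
    (hbounds : ∀ j, ∀ c : Fin (N j) → ℝ,
      α₀ * ∑ k, (c k) ^ 2 ≤ ‖∑ k, c k • φ j k‖ ^ 2 ∧
      ‖∑ k, c k • φ j k‖ ^ 2 ≤ β₀ * ∑ k, (c k) ^ 2) :
    frameUpper (fun p : Σ j : Fin J, Fin (N j) => φ p.1 p.2)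
      / frameLower (fun p : Σ j : Fin J, Fin (N j) => φ p.1 p.2)
    ≤ a⁻¹ * b * (β₀ / α₀) ^ 2 := by
  classical
  have hβ₀ : 0 < β₀ := lt_of_lt_of_le hα₀ hαβ
  set Φ : (Σ j : Fin J, Fin (N j)) → W := (fun p : Σ j : Fin J, Fin (N j) => φ p.1 p.2) with hΦ
  have key : ∀ u : W, u ≠ 0 →
      α₀ / b ≤ ‖u‖ ^ 2 / sInf (repSquares Φ u) ∧
      ‖u‖ ^ 2 / sInf (repSquares Φ u) ≤ β₀ / a := by
    intro u hu
    have hun : 0 < ‖u‖ ^ 2 := by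
      have : 0 < ‖u‖ := norm_pos_iff.mpr hu
      positivity
    -- every element of repSquares is bounded below
    have hub : ∀ s ∈ repSquares Φ u, a / β₀ * ‖u‖ ^ 2 ≤ s := by
      rintro s ⟨c, hc, rfl⟩
      set v : Fin J → W := fun j => ∑ k, c ⟨j, k⟩ • φ j k with hv
      have hvmem : ∀ j, v j ∈ Wsub j := fun j =>
        Submodule.sum_mem _ (fun k _ => Submodule.smul_mem _ _ (hmem j k))
      have husum : u = ∑ j, v j := by
        rw [hc, ← Finset.univ_sigma_univ, Finset.sum_sigma]
      have h1 : a * ‖u‖ ^ 2 ≤ ∑ j, ‖v j‖ ^ 2 := by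
        rw [husum]; exact hlow v hvmem
      have h2 : ∑ j, ‖v j‖ ^ 2 ≤ β₀ * ∑ p, (c p) ^ 2 := by
        rw [← Finset.univ_sigma_univ, Finset.sum_sigma, Finset.mul_sum]
        exact Finset.sum_le_sum fun j _ => (hbounds j (fun k => c ⟨j, k⟩)).2
      have h3 : a * ‖u‖ ^ 2 ≤ β₀ * ∑ p, (c p) ^ 2 := h1.trans h2
      rw [div_mul_eq_mul_div, div_le_iff₀ hβ₀]
      linarith [h3]
    -- a good representation exists
    obtain ⟨v, hvm, hvsum, hvb⟩ := hdec u
    have hrep : ∀ j, ∃ cj : Fin (N j) → ℝ, ∑ k, cj k • φ j k = v j := by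
      intro j
      have hmemv : v j ∈ Submodule.span ℝ (Set.range (φ j)) := (hspan j).symm ▸ hvm j
      exact (Submodule.mem_span_range_iff_exists_fun ℝ).mp hmemv
    choose cf hcf using hrep
    set c : (Σ j : Fin J, Fin (N j)) → ℝ := fun p => cf p.1 p.2 with hcdef
    have hmem' : (∑ p, (c p) ^ 2) ∈ repSquares Φ u := by
      refine ⟨c, ?_, rfl⟩
      rw [hvsum, ← Finset.univ_sigma_univ, Finset.sum_sigma]
      exact Finset.sum_congr rfl fun j _ => (hcf j).symm
    have hcsum : ∑ p, (c p) ^ 2 ≤ b / α₀ * ‖u‖ ^ 2 := by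
      have hj : ∀ j, ∑ k, (cf j k) ^ 2 ≤ ‖v j‖ ^ 2 / α₀ := by
        intro j
        rw [le_div_iff₀ hα₀, mul_comm]
        calc α₀ * ∑ k, (cf j k) ^ 2 ≤ ‖∑ k, cf j k • φ j k‖ ^ 2 := (hbounds j (cf j)).1
          _ = ‖v j‖ ^ 2 := by rw [hcf j]
      calc ∑ p, (c p) ^ 2 = ∑ j, ∑ k, (cf j k) ^ 2 := by
            rw [← Finset.univ_sigma_univ, Finset.sum_sigma]
        _ ≤ ∑ j, ‖v j‖ ^ 2 / α₀ := Finset.sum_le_sum fun j _ => hj j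
        _ = (∑ j, ‖v j‖ ^ 2) / α₀ := by rw [Finset.sum_div]
        _ ≤ (b * ‖u‖ ^ 2) / α₀ := by gcongr
        _ = b / α₀ * ‖u‖ ^ 2 := by ring
    have hne : (repSquares Φ u).Nonempty := ⟨_, hmem'⟩
    have hbdd : BddBelow (repSquares Φ u) := ⟨a / β₀ * ‖u‖ ^ 2, hub⟩
    have hInf_ge : a / β₀ * ‖u‖ ^ 2 ≤ sInf (repSquares Φ u) := le_csInf hne hub
    have hInf_le : sInf (repSquares Φ u) ≤ b / α₀ * ‖u‖ ^ 2 :=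
      (csInf_le hbdd hmem').trans hcsum
    have hInfpos : 0 < sInf (repSquares Φ u) :=
      lt_of_lt_of_le (by positivity) hInf_ge
    constructor
    · rw [div_le_div_iff₀ hb hInfpos]
      have : α₀ * (sInf (repSquares Φ u)) ≤ α₀ * (b / α₀ * ‖u‖ ^ 2) := by
        exact mul_le_mul_of_nonneg_left hInf_le hα₀.le
      have heq : α₀ * (b / α₀ * ‖u‖ ^ 2) = b * ‖u‖ ^ 2 := by
        field_simp
      nlinarith [this]
    · rw [div_le_div_iff₀ hInfpos ha]
      have : β₀ * (a / β₀ * ‖u‖ ^ 2) ≤ β₀ * (sInf (repSquares Φ u)) := by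
        exact mul_le_mul_of_nonneg_left hInf_ge hβ₀.le
      have heq : β₀ * (a / β₀ * ‖u‖ ^ 2) = a * ‖u‖ ^ 2 := by
        field_simp
      nlinarith [this]
  haveI : Nonempty {u : W // u ≠ 0} := by
    obtain ⟨x, hx⟩ := exists_ne (0 : W)
    exact ⟨⟨x, hx⟩⟩
  have hup : frameUpper Φ ≤ β₀ / a := ciSup_le fun u => (key u u.2).2
  have hlo : α₀ / b ≤ frameLower Φ := le_ciInf fun u => (key u u.2).1
  have h0 : 0 < α₀ / b := div_pos hα₀ hb
  have step1 : frameUpper Φ / frameLower Φ ≤ (β₀ / a) / (α₀ / b) :=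
    div_le_div₀ (by positivity) hup h0 hlo
  refine step1.trans ?_
  have e1 : (β₀ / a) / (α₀ / b) = (b * β₀) / (a * α₀) := by
    field_simp
  have e2 : a⁻¹ * b * (β₀ / α₀) ^ 2 = (b * β₀ ^ 2) / (a * α₀ ^ 2) := by
    field_simp
  rw [e1, e2, div_le_div_iff₀ (by positivity) (by positivity)]
  nlinarith [mul_le_mul_of_nonneg_left hαβ (by positivity : (0:ℝ) ≤ a * b * α₀ * β₀)]
end

section
/- Let W be a nonzero finite-dimensional real inner product space and let W₁, …, W_J be subspaces with W = W₁ + ⋯ + W_J. Assume there are constants a, b > 0 such that (i) a‖u₁ + ⋯ + u_J‖² ≤ Σⱼ ‖uⱼ‖² for all choices uⱼ ∈ Wⱼ, and (ii) every u ∈ W admits a decomposition u = u₁ + ⋯ + u_J with uⱼ ∈ Wⱼ and Σⱼ ‖uⱼ‖² ≤ b‖u‖². For each j, let φ_{j,1}, …, φ_{j,N_j} be an orthonormal basis of Wⱼ. Then the frame condition number of Φ = {φ_{j,k}}_{j,k} satisfies 𝒦(Φ) ≤ a⁻¹ b. -/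
open scoped RealInnerProductSpace
set_option maxHeartbeats 1000000

lemma aux_sum_sigma {J : ℕ} {N : Fin J → ℕ} {M : Type*} [AddCommMonoid M]
    (f : (Σ j : Fin J, Fin (N j)) → M) :
    ∑ p : Σ j : Fin J, Fin (N j), f p = ∑ j, ∑ k, f ⟨j, k⟩ := by
  rw [← Finset.univ_sigma_univ, Finset.sum_sigma]

/-- Squared norm of a linear combination of an orthonormal family. -/
lemma aux_norm_sq_sum {W : Type*} [NormedAddCommGroup W] [InnerProductSpace ℝ W]
    {ι : Type*} [Fintype ι] {v : ι → W} (hv : Orthonormal ℝ v) (c : ι → ℝ) :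
    ‖∑ i, c i • v i‖ ^ 2 = ∑ i, (c i) ^ 2 := by
  rw [← real_inner_self_eq_norm_sq, hv.inner_sum]
  simp [sq]

/-- For a frame obtained from a stable space decomposition `W = W₁ + ⋯ + W_J` using an
orthonormal basis of each subspace, the frame condition number satisfies
`𝒦(Φ) ≤ a⁻¹ b`. -/
theorem stmt_7 {W : Type*} [NormedAddCommGroup W] [InnerProductSpace ℝ W]
    [FiniteDimensional ℝ W] [Nontrivial W]
    {J : ℕ} (hJ : 0 < J) (Wsub : Fin J → Submodule ℝ W)
    (hsum : (⨆ j, Wsub j) = ⊤)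
    (a b : ℝ) (ha : 0 < a) (hb : 0 < b)
    (hlow : ∀ u : Fin J → W, (∀ j, u j ∈ Wsub j) →
      a * ‖∑ j, u j‖ ^ 2 ≤ ∑ j, ‖u j‖ ^ 2)
    (hdec : ∀ u : W, ∃ v : Fin J → W, (∀ j, v j ∈ Wsub j) ∧ u = ∑ j, v j ∧
      ∑ j, ‖v j‖ ^ 2 ≤ b * ‖u‖ ^ 2)
    (N : Fin J → ℕ) (φ : (j : Fin J) → Fin (N j) → W)
    (hmem : ∀ j k, φ j k ∈ Wsub j)
    (hon : ∀ j, Orthonormal ℝ (φ j))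
    (hspan : ∀ j, Submodule.span ℝ (Set.range (φ j)) = Wsub j) :
    frameUpper (fun p : Σ j : Fin J, Fin (N j) => φ p.1 p.2)
      / frameLower (fun p : Σ j : Fin J, Fin (N j) => φ p.1 p.2)
    ≤ a⁻¹ * b := by
  set Φ : (Σ j : Fin J, Fin (N j)) → W := fun p => φ p.1 p.2 with hΦ
  have key : ∀ u : W, u ≠ 0 →
      1 / b ≤ ‖u‖ ^ 2 / sInf (repSquares Φ u) ∧
      ‖u‖ ^ 2 / sInf (repSquares Φ u) ≤ 1 / a := by
    intro u hu
    have hu2 : (0:ℝ) < ‖u‖ ^ 2 := pow_pos (norm_pos_iff.mpr hu) 2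
    obtain ⟨v, hv, huv, hvb⟩ := hdec u
    -- express each v j in the orthonormal basis of Wsub j
    have hc : ∀ j, ∃ c : Fin (N j) → ℝ,
        ∑ k, c k • φ j k = v j ∧ ∑ k, (c k) ^ 2 = ‖v j‖ ^ 2 := by
      intro j
      have hvj : v j ∈ Submodule.span ℝ (Set.range (φ j)) := by
        rw [hspan j]; exact hv j
      obtain ⟨c, hc⟩ := (Submodule.mem_span_range_iff_exists_fun ℝ).mp hvj
      exact ⟨c, hc, by rw [← hc, aux_norm_sq_sum (hon j)]⟩
    choose c hc1 hc2 using hc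
    have hmemS : (∑ j, ‖v j‖ ^ 2) ∈ repSquares Φ u := by
      refine ⟨fun p => c p.1 p.2, ?_, ?_⟩
      · rw [huv, aux_sum_sigma]
        exact Finset.sum_congr rfl fun j _ => (hc1 j).symm
      · rw [aux_sum_sigma]
        exact (Finset.sum_congr rfl fun j _ => hc2 j).symm
    have hlb : ∀ s ∈ repSquares Φ u, a * ‖u‖ ^ 2 ≤ s := by
      rintro s ⟨d, hud, rfl⟩
      have hw : ∀ j, (∑ k, d ⟨j, k⟩ • φ j k) ∈ Wsub j := fun j =>
        Submodule.sum_mem _ fun k _ => Submodule.smul_mem _ _ (hmem j k)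
      have h1 := hlow (fun j => ∑ k, d ⟨j, k⟩ • φ j k) hw
      have h2 : ∑ j, ∑ k, d ⟨j, k⟩ • φ j k = u := by
        rw [hud, aux_sum_sigma]
      have h3 : ∀ j, ‖∑ k, d ⟨j, k⟩ • φ j k‖ ^ 2 = ∑ k, (d ⟨j, k⟩) ^ 2 := fun j =>
        aux_norm_sq_sum (hon j) _
      calc a * ‖u‖ ^ 2 = a * ‖∑ j, ∑ k, d ⟨j, k⟩ • φ j k‖ ^ 2 := by rw [h2]
        _ ≤ ∑ j, ‖∑ k, d ⟨j, k⟩ • φ j k‖ ^ 2 := h1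
        _ = ∑ j, ∑ k, (d ⟨j, k⟩) ^ 2 := Finset.sum_congr rfl fun j _ => h3 j
        _ = ∑ p : Σ j : Fin J, Fin (N j), (d p) ^ 2 := (aux_sum_sigma (fun p => (d p) ^ 2)).symm
    have hsne : (repSquares Φ u).Nonempty := ⟨_, hmemS⟩
    have hsinf_lb : a * ‖u‖ ^ 2 ≤ sInf (repSquares Φ u) := le_csInf hsne hlb
    have hsinf_pos : 0 < sInf (repSquares Φ u) :=
      lt_of_lt_of_le (mul_pos ha hu2) hsinf_lb
    have hsinf_ub : sInf (repSquares Φ u) ≤ b * ‖u‖ ^ 2 :=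
      (csInf_le ⟨a * ‖u‖ ^ 2, hlb⟩ hmemS).trans hvb
    constructor
    · rw [div_le_div_iff₀ hb hsinf_pos]
      nlinarith
    · rw [div_le_div_iff₀ hsinf_pos ha]
      nlinarith
  have hne : Nonempty {u : W // u ≠ 0} := by
    obtain ⟨x, hx⟩ := exists_ne (0 : W)
    exact ⟨⟨x, hx⟩⟩
  have hup : frameUpper Φ ≤ 1 / a := ciSup_le fun u => (key u u.2).2
  have hlo : 1 / b ≤ frameLower Φ := le_ciInf fun u => (key u u.2).1
  calc frameUpper Φ / frameLower Φ ≤ (1 / a) / (1 / b) :=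
        div_le_div₀ (by positivity) hup (by positivity) hlo
    _ = a⁻¹ * b := by field_simp
end

section
/- Let V be a finite-dimensional real inner product space, let τ : ℝᴺ → V be a surjective linear map with adjoint τ* : V → ℝᴺ, let 𝒜 : V → V be a selfadjoint positive definite linear operator, and let 𝔹 be a symmetric positive definite N×N real matrix. Set A = τ* ∘ 𝒜 ∘ τ and ℬ = τ ∘ 𝔹 ∘ τ*. Then τ ∘ (𝔹A) = (ℬ𝒜) ∘ τ, and moreover the range of 𝔹A equals the orthogonal complement of ker(𝔹A) = ker(τ) with respect to the inner product ⟨x, y⟩_{𝔹⁻¹} = x · 𝔹⁻¹y on ℝᴺ; in particular 𝔹A maps this complement into itself. -/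
open scoped RealInnerProductSpace

/-- For a surjective frame representation `τ : ℝᴺ → V`, a selfadjoint positive definite
operator `𝒜` on `V`, and a symmetric positive definite matrix preconditioner `𝔹`, with
`A = τ*𝒜τ` and `ℬ = τ𝔹τ*`, one has `τ ∘ (𝔹A) = (ℬ𝒜) ∘ τ`, the kernel of `𝔹A` is
`ker τ`, its range is the `𝔹⁻¹`-orthogonal complement of `ker τ`, and in particular `𝔹A`
maps this complement into itself. -/
theorem stmt_13 {V : Type*} [NormedAddCommGroup V] [InnerProductSpace ℝ V]
    [FiniteDimensional ℝ V] {N : ℕ}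
    (τ : EuclideanSpace ℝ (Fin N) →ₗ[ℝ] V) (hτ : Function.Surjective τ)
    (𝒜 : V →ₗ[ℝ] V)
    (hsa : ∀ u v : V, ⟪𝒜 u, v⟫ = ⟪u, 𝒜 v⟫)
    (hpd : ∀ v : V, v ≠ 0 → 0 < ⟪𝒜 v, v⟫)
    (𝔹 : Matrix (Fin N) (Fin N) ℝ) (h𝔹 : 𝔹.PosDef)
    (A : EuclideanSpace ℝ (Fin N) →ₗ[ℝ] EuclideanSpace ℝ (Fin N))
    (hA : A = LinearMap.adjoint τ ∘ₗ 𝒜 ∘ₗ τ)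
    (ℬ : V →ₗ[ℝ] V)
    (hℬ : ℬ = τ ∘ₗ Matrix.toEuclideanLin 𝔹 ∘ₗ LinearMap.adjoint τ) :
    (τ ∘ₗ (Matrix.toEuclideanLin 𝔹 ∘ₗ A) = (ℬ ∘ₗ 𝒜) ∘ₗ τ)
    ∧ LinearMap.ker (Matrix.toEuclideanLin 𝔹 ∘ₗ A) = LinearMap.ker τ
    ∧ (LinearMap.range (Matrix.toEuclideanLin 𝔹 ∘ₗ A) : Set (EuclideanSpace ℝ (Fin N)))
        = {x | ∀ y ∈ LinearMap.ker τ, ⟪x, Matrix.toEuclideanLin 𝔹⁻¹ y⟫ = 0}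
    ∧ ∀ x : EuclideanSpace ℝ (Fin N),
        (∀ y ∈ LinearMap.ker τ, ⟪x, Matrix.toEuclideanLin 𝔹⁻¹ y⟫ = 0) →
        ∀ y ∈ LinearMap.ker τ,
          ⟪(Matrix.toEuclideanLin 𝔹 ∘ₗ A) x, Matrix.toEuclideanLin 𝔹⁻¹ y⟫ = 0 := by
  set B : EuclideanSpace ℝ (Fin N) →ₗ[ℝ] EuclideanSpace ℝ (Fin N) :=
    Matrix.toEuclideanLin 𝔹 with hB
  set Bi : EuclideanSpace ℝ (Fin N) →ₗ[ℝ] EuclideanSpace ℝ (Fin N) :=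
    Matrix.toEuclideanLin 𝔹⁻¹ with hBi
  have hdet : IsUnit 𝔹.det := isUnit_iff_ne_zero.2 (ne_of_gt h𝔹.det_pos)
  have hmul : ∀ (M M' : Matrix (Fin N) (Fin N) ℝ),
      Matrix.toEuclideanLin (M * M') =
        Matrix.toEuclideanLin M ∘ₗ Matrix.toEuclideanLin M' := by
    intro M M'
    rw [Matrix.toEuclideanLin_eq_toLin, Matrix.toLin_mul _ (PiLp.basisFun _ _ _)]
  have hBBi : B ∘ₗ Bi = LinearMap.id := by
    rw [hB, hBi, ← hmul, Matrix.mul_nonsing_inv _ hdet]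
    rw [Matrix.toEuclideanLin_eq_toLin, Matrix.toLin_one]
  have hBiB : Bi ∘ₗ B = LinearMap.id := by
    rw [hB, hBi, ← hmul, Matrix.nonsing_inv_mul _ hdet]
    rw [Matrix.toEuclideanLin_eq_toLin, Matrix.toLin_one]
  -- B is symmetric
  have hBsym : ∀ u v : EuclideanSpace ℝ (Fin N), ⟪B u, v⟫ = ⟪u, B v⟫ :=
    fun u v => (Matrix.isHermitian_iff_isSymmetric.1 h𝔹.1 u v)
  have hBinj : Function.Injective B := by
    have : Function.LeftInverse Bi B := fun x => by
      simpa using LinearMap.congr_fun hBiB x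
    exact this.injective
  -- key inner product identity
  have hAinner : ∀ x y : EuclideanSpace ℝ (Fin N), ⟪y, A x⟫ = ⟪τ y, 𝒜 (τ x)⟫ := by
    intro x y
    rw [hA]
    simp [LinearMap.adjoint_inner_right]
  -- kernel of A = kernel of τ
  have hkerA : LinearMap.ker A = LinearMap.ker τ := by
    ext x
    simp only [LinearMap.mem_ker]
    constructor
    · intro hx
      by_contra hne
      have h1 : ⟪x, A x⟫ = 0 := by rw [hx]; simp
      rw [hAinner] at h1
      have := hpd (τ x) hne
      rw [real_inner_comm] at this
      linarith
    · intro hx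
      rw [hA]; simp [hx]
  have hkerBA : LinearMap.ker (B ∘ₗ A) = LinearMap.ker τ := by
    rw [LinearMap.ker_comp, LinearMap.ker_eq_bot.2 hBinj, Submodule.comap_bot, hkerA]
  -- the orthogonal complement
  set K : Submodule ℝ (EuclideanSpace ℝ (Fin N)) := (LinearMap.ker τ).map Bi with hK
  have hSet : {x : EuclideanSpace ℝ (Fin N) | ∀ y ∈ LinearMap.ker τ, ⟪x, Bi y⟫ = 0}
      = (Kᗮ : Set (EuclideanSpace ℝ (Fin N))) := by
    ext x
    simp only [Set.mem_setOf_eq, SetLike.mem_coe, Submodule.mem_orthogonal, hK,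
      Submodule.mem_map]
    constructor
    · rintro h u ⟨y, hy, rfl⟩
      rw [real_inner_comm]; exact h y hy
    · intro h y hy
      rw [real_inner_comm]; exact h _ ⟨y, hy, rfl⟩
  -- range ≤ Kᗮ
  have hle : LinearMap.range (B ∘ₗ A) ≤ Kᗮ := by
    rintro _ ⟨z, rfl⟩
    rw [Submodule.mem_orthogonal]
    rintro u hu
    rcases Submodule.mem_map.1 hu with ⟨y, hy, rfl⟩
    have h1 : ⟪Bi y, (B ∘ₗ A) z⟫ = ⟪B (Bi y), A z⟫ := by
      rw [real_inner_comm, hBsym, real_inner_comm]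
      rfl
    have h2 : B (Bi y) = y := by simpa using LinearMap.congr_fun hBBi y
    rw [h1, h2, hAinner, LinearMap.mem_ker.1 hy]
    simp
  -- finrank equality
  have hfin : Module.finrank ℝ (LinearMap.range (B ∘ₗ A)) = Module.finrank ℝ Kᗮ := by
    have hKfin : Module.finrank ℝ K = Module.finrank ℝ (LinearMap.ker τ) := by
      rw [hK, show Bi = (LinearEquiv.ofLinear Bi B hBiB hBBi : _ →ₗ[ℝ] _) from rfl,
        LinearEquiv.finrank_map_eq]
      all_goals infer_instance
    have h1 := LinearMap.finrank_range_add_finrank_ker (B ∘ₗ A)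
    have h2 := Submodule.finrank_add_finrank_orthogonal K
    rw [hkerBA] at h1
    rw [hKfin] at h2
    simp only [finrank_euclideanSpace, Fintype.card_fin] at h1 h2
    omega
  have hrange : LinearMap.range (B ∘ₗ A) = Kᗮ :=
    Submodule.eq_of_le_of_finrank_eq hle hfin
  refine ⟨?_, hkerBA, ?_, ?_⟩
  · rw [hℬ, hA]; ext x; simp
  · rw [hrange, hSet]
  · intro x _ y hy
    have : (B ∘ₗ A) x ∈ Kᗮ := hrange ▸ LinearMap.mem_range_self _ x
    have := (Submodule.mem_orthogonal _ _).1 this (Bi y) ⟨y, hy, rfl⟩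
    rw [real_inner_comm] at this
    exact this
end

section
/- Let V be a finite-dimensional real inner product space, let τ : ℝᴺ → V be a surjective linear map with adjoint τ* : V → ℝᴺ, let 𝒜 : V → V be a selfadjoint positive definite linear operator, and let 𝔹 be a symmetric positive definite N×N real matrix. Set A = τ* ∘ 𝒜 ∘ τ and ℬ = τ ∘ 𝔹 ∘ τ*, and let K ⊆ ℝᴺ be the orthogonal complement of ker(τ) with respect to the inner product ⟨x,y⟩_{𝔹⁻¹} = x · 𝔹⁻¹y. Then the restriction τ̂ of τ to K is a linear bijection onto V, the matrix 𝔹A maps K into itself, and the restriction of 𝔹A to K equals τ̂⁻¹ ∘ (ℬ𝒜) ∘ τ̂; consequently the restriction of 𝔹A to K has the same eigenvalues as the operator ℬ𝒜 : V → V. -/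
open scoped RealInnerProductSpace

/-- Frame-independence of the preconditioned system: with `A = τ*𝒜τ`, `ℬ = τ𝔹τ*`, and
`K` the `𝔹⁻¹`-orthogonal complement of `ker τ`, the restriction of `τ` to `K` is a
bijection onto `V`, the matrix `𝔹A` maps `K` into itself, its restriction to `K` is
conjugate (via this bijection) to the operator `ℬ𝒜 : V → V`, and consequently the
restriction of `𝔹A` to `K` has the same eigenvalues as `ℬ𝒜`. -/
theorem stmt_14 {V : Type*} [NormedAddCommGroup V] [InnerProductSpace ℝ V]
    [FiniteDimensional ℝ V] {N : ℕ}
    (τ : EuclideanSpace ℝ (Fin N) →ₗ[ℝ] V) (hτ : Function.Surjective τ)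
    (𝒜 : V →ₗ[ℝ] V)
    (hsa : ∀ u v : V, ⟪𝒜 u, v⟫ = ⟪u, 𝒜 v⟫)
    (hpd : ∀ v : V, v ≠ 0 → 0 < ⟪𝒜 v, v⟫)
    (𝔹 : Matrix (Fin N) (Fin N) ℝ) (h𝔹 : 𝔹.PosDef)
    (A : EuclideanSpace ℝ (Fin N) →ₗ[ℝ] EuclideanSpace ℝ (Fin N))
    (hA : A = LinearMap.adjoint τ ∘ₗ 𝒜 ∘ₗ τ)
    (ℬ : V →ₗ[ℝ] V)
    (hℬ : ℬ = τ ∘ₗ Matrix.toEuclideanLin 𝔹 ∘ₗ LinearMap.adjoint τ)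
    (K : Set (EuclideanSpace ℝ (Fin N)))
    (hK : K = {x | ∀ y ∈ LinearMap.ker τ, ⟪x, Matrix.toEuclideanLin 𝔹⁻¹ y⟫ = 0}) :
    Function.Bijective (fun x : K => τ (x : EuclideanSpace ℝ (Fin N)))
    ∧ (∀ x ∈ K, (Matrix.toEuclideanLin 𝔹) (A x) ∈ K)
    ∧ (∀ x ∈ K, τ ((Matrix.toEuclideanLin 𝔹) (A x)) = ℬ (𝒜 (τ x)))
    ∧ ∀ μ : ℝ,
        (∃ x ∈ K, x ≠ 0 ∧ (Matrix.toEuclideanLin 𝔹) (A x) = μ • x) ↔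
        (∃ v : V, v ≠ 0 ∧ ℬ (𝒜 v) = μ • v) := by
  set M := Matrix.toEuclideanLin 𝔹 with hMdef
  set Mi := Matrix.toEuclideanLin 𝔹⁻¹ with hMidef
  have hdet : IsUnit 𝔹.det := h𝔹.det_pos.ne'.isUnit
  have hMMi : ∀ y, M (Mi y) = y := by
    intro y
    simp [hMdef, hMidef, Matrix.toEuclideanLin_apply, Matrix.mulVec_mulVec,
      Matrix.mul_nonsing_inv 𝔹 hdet]
  have hMsym : M.IsSymmetric := (Matrix.isHermitian_iff_isSymmetric).1 h𝔹.isHermitian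
  have hMipos : ∀ x : EuclideanSpace ℝ (Fin N), x ≠ 0 → 0 < ⟪x, Mi x⟫ := by
    intro x hx
    have := h𝔹.inv.re_dotProduct_pos (x := WithLp.equiv 2 (Fin N → ℝ) x)
      (by simpa using hx)
    simpa [EuclideanSpace.inner_eq_star_dotProduct, hMidef,
      Matrix.toEuclideanLin_apply, dotProduct_comm] using this
  -- membership of M (τ* v) in K
  have hmem : ∀ v : V, M ((LinearMap.adjoint τ) v) ∈ K := by
    intro v
    rw [hK]
    intro y hy
    rw [hMsym _ (Mi y), hMMi, LinearMap.adjoint_inner_left]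
    simp [LinearMap.mem_ker.1 hy]
  -- injectivity of τ on K
  have hKinj : ∀ x ∈ K, τ x = 0 → x = 0 := by
    intro x hx hτx
    by_contra h0
    have := hMipos x h0
    rw [hK] at hx
    have := hx x (LinearMap.mem_ker.2 hτx)
    linarith [hMipos x h0]
  -- ℬ is injective hence surjective
  have hadj_inj : Function.Injective (LinearMap.adjoint τ) := by
    intro a b hab
    have h : ∀ y, ⟪a - b, τ y⟫ = 0 := by
      intro y
      have : ⟪(LinearMap.adjoint τ) (a - b), y⟫ = 0 := by
        rw [map_sub, hab, sub_self]; simp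
      rwa [LinearMap.adjoint_inner_left] at this
    have h2 : ⟪a - b, a - b⟫ = 0 := by
      obtain ⟨y, hy⟩ := hτ (a - b)
      simpa [hy] using h y
    exact sub_eq_zero.1 (inner_self_eq_zero.1 h2)
  have hBbij : Function.Bijective ℬ := by
    have hinj : Function.Injective ℬ := by
      rw [injective_iff_map_eq_zero]
      intro w hw
      by_contra h0
      have hw' : (LinearMap.adjoint τ) w ≠ 0 := by
        intro h
        exact h0 (hadj_inj (by simpa using h))
      have hpos : 0 < ⟪(LinearMap.adjoint τ) w, M ((LinearMap.adjoint τ) w)⟫ := by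
        have := h𝔹.re_dotProduct_pos (x := WithLp.equiv 2 (Fin N → ℝ) ((LinearMap.adjoint τ) w))
          (by simpa using hw')
        simpa [EuclideanSpace.inner_eq_star_dotProduct, hMdef,
          Matrix.toEuclideanLin_apply, dotProduct_comm] using this
      have hzero : ⟪(LinearMap.adjoint τ) w, M ((LinearMap.adjoint τ) w)⟫ = 0 := by
        have : ⟪w, ℬ w⟫ = 0 := by rw [hw]; simp
        rw [hℬ] at this
        simp only [LinearMap.comp_apply] at this
        rwa [← LinearMap.adjoint_inner_left τ] at this
      linarith
    exact ⟨hinj, LinearMap.injective_iff_surjective.1 hinj⟩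
  -- surjectivity of τ on K
  have hKsurj : ∀ v : V, ∃ x ∈ K, τ x = v := by
    intro v
    obtain ⟨w, hw⟩ := hBbij.2 v
    refine ⟨M ((LinearMap.adjoint τ) w), hmem w, ?_⟩
    rw [← hw, hℬ]; rfl
  -- K closed under subtraction and smul
  have hKsub : ∀ x ∈ K, ∀ y ∈ K, x - y ∈ K := by
    intro x hx y hy
    rw [hK] at *
    intro z hz
    rw [inner_sub_left, hx z hz, hy z hz, sub_zero]
  have hKsmul : ∀ (c : ℝ), ∀ x ∈ K, c • x ∈ K := by
    intro c x hx
    rw [hK] at *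
    intro z hz
    rw [real_inner_smul_left, hx z hz, mul_zero]
  -- conjugation identity (for all x)
  have hconj : ∀ x, τ (M (A x)) = ℬ (𝒜 (τ x)) := by
    intro x
    rw [hA, hℬ]; rfl
  have hMA_mem : ∀ x, M (A x) ∈ K := by
    intro x
    rw [hA]
    exact hmem _
  refine ⟨⟨?_, ?_⟩, fun x _ => hMA_mem x, fun x _ => hconj x, fun μ => ⟨?_, ?_⟩⟩
  · rintro ⟨a, ha⟩ ⟨b, hb⟩ hab
    simp only at hab
    have : a - b = 0 := hKinj _ (hKsub a ha b hb) (by rw [map_sub, hab, sub_self])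
    exact Subtype.ext (sub_eq_zero.1 this)
  · intro v
    obtain ⟨x, hx, hτx⟩ := hKsurj v
    exact ⟨⟨x, hx⟩, hτx⟩
  · rintro ⟨x, hx, hx0, hev⟩
    refine ⟨τ x, fun h => hx0 (hKinj x hx h), ?_⟩
    rw [← hconj, hev, map_smul]
  · rintro ⟨v, hv0, hev⟩
    obtain ⟨x, hx, hτx⟩ := hKsurj v
    have hx0 : x ≠ 0 := by rintro rfl; exact hv0 (by simp [← hτx])
    refine ⟨x, hx, hx0, ?_⟩
    have hd : M (A x) - μ • x ∈ K := hKsub _ (hMA_mem x) _ (hKsmul μ x hx)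
    have : τ (M (A x) - μ • x) = 0 := by
      rw [map_sub, hconj, hτx, hev, map_smul, hτx, sub_self]
    have := hKinj _ hd this
    exact sub_eq_zero.1 this
end

section
/- Let V be a nonzero finite-dimensional real inner product space, let n be its dimension, let τ : ℝⁿ → V be a linear isomorphism with adjoint τ* : V → ℝⁿ, and let ℬ : V → V be a selfadjoint positive definite linear operator. Define the matrix B = τ⁻¹ ∘ ℬ ∘ (τ*)⁻¹ : ℝⁿ → ℝⁿ and the mass matrix M = τ* ∘ τ. Then the spectral condition number of B satisfies κ(B) ≤ κ(ℬ) · κ(M), where κ(ℬ) = (sup over nonzero v ∈ V of ⟨ℬv,v⟩/⟨v,v⟩)/(inf over nonzero v ∈ V of ⟨ℬv,v⟩/⟨v,v⟩), and κ(B), κ(M) are the analogous ratios of extreme Rayleigh quotients on ℝⁿ. -/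
open scoped RealInnerProductSpace

lemma pd_lower {E : Type*} [NormedAddCommGroup E] [InnerProductSpace ℝ E]
    [FiniteDimensional ℝ E] [Nontrivial E] (T : E →ₗ[ℝ] E)
    (hpd : ∀ v : E, v ≠ 0 → 0 < ⟪T v, v⟫) :
    ∃ a : ℝ, 0 < a ∧ ∀ v : E, v ≠ 0 → a ≤ ⟪T v, v⟫ / ⟪v, v⟫ := by
  have hcont : Continuous fun v : E => ⟪T v, v⟫ :=
    (LinearMap.toContinuousLinearMap T).continuous.inner continuous_id
  obtain ⟨v₀, hv₀mem, hmin⟩ := (isCompact_sphere (0:E) 1).exists_isMinOn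
    (NormedSpace.sphere_nonempty.mpr zero_le_one) hcont.continuousOn
  have hv₀norm : ‖v₀‖ = 1 := by simpa using mem_sphere_zero_iff_norm.mp hv₀mem
  have hv₀ : v₀ ≠ 0 := by intro h; rw [h] at hv₀norm; simp at hv₀norm
  refine ⟨⟪T v₀, v₀⟫, hpd v₀ hv₀, fun v hv => ?_⟩
  have hnv : (0:ℝ) < ‖v‖ := norm_pos_iff.mpr hv
  have hmem : (‖v‖⁻¹ • v) ∈ Metric.sphere (0:E) 1 := by
    simp [norm_smul, abs_of_pos (inv_pos.mpr hnv), inv_mul_cancel₀ hnv.ne']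
  have h1 : ⟪T v₀, v₀⟫ ≤ ⟪T (‖v‖⁻¹ • v), ‖v‖⁻¹ • v⟫ := hmin hmem
  have h2 : ⟪T (‖v‖⁻¹ • v), ‖v‖⁻¹ • v⟫ = ⟪T v, v⟫ / ⟪v, v⟫ := by
    rw [map_smul, real_inner_smul_left, real_inner_smul_right,
      real_inner_self_eq_norm_sq, pow_two, div_eq_mul_inv, mul_inv]
    ring
  rw [h2] at h1
  exact h1

set_option maxHeartbeats 1000000

/-- For a basis representation `τ : ℝⁿ ≃ V` of a selfadjoint positive definite
preconditioner `ℬ : V → V`, the matrix `B = τ⁻¹ ∘ ℬ ∘ (τ*)⁻¹` and the mass matrix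
`M = τ* ∘ τ` satisfy `κ(B) ≤ κ(ℬ) · κ(M)`, where the condition numbers are ratios of
extreme Rayleigh quotients. -/
theorem stmt_15 {V : Type*} [NormedAddCommGroup V] [InnerProductSpace ℝ V]
    [FiniteDimensional ℝ V] [Nontrivial V]
    {n : ℕ} (hn : n = Module.finrank ℝ V)
    (τ : EuclideanSpace ℝ (Fin n) ≃ₗ[ℝ] V)
    (ℬ : V →ₗ[ℝ] V)
    (hsa : ∀ u v : V, ⟪ℬ u, v⟫ = ⟪u, ℬ v⟫)
    (hpd : ∀ v : V, v ≠ 0 → 0 < ⟪ℬ v, v⟫)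
    (B : EuclideanSpace ℝ (Fin n) →ₗ[ℝ] EuclideanSpace ℝ (Fin n))
    (hB : B = τ.symm.toLinearMap ∘ₗ ℬ ∘ₗ LinearMap.adjoint τ.symm.toLinearMap)
    (M : EuclideanSpace ℝ (Fin n) →ₗ[ℝ] EuclideanSpace ℝ (Fin n))
    (hM : M = LinearMap.adjoint τ.toLinearMap ∘ₗ τ.toLinearMap) :
    (⨆ c : {c : EuclideanSpace ℝ (Fin n) // c ≠ 0},
        ⟪B (c : EuclideanSpace ℝ (Fin n)), (c : EuclideanSpace ℝ (Fin n))⟫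
          / ⟪(c : EuclideanSpace ℝ (Fin n)), (c : EuclideanSpace ℝ (Fin n))⟫)
      / (⨅ c : {c : EuclideanSpace ℝ (Fin n) // c ≠ 0},
          ⟪B (c : EuclideanSpace ℝ (Fin n)), (c : EuclideanSpace ℝ (Fin n))⟫
            / ⟪(c : EuclideanSpace ℝ (Fin n)), (c : EuclideanSpace ℝ (Fin n))⟫)
    ≤ ((⨆ v : {v : V // v ≠ 0}, ⟪ℬ (v : V), (v : V)⟫ / ⟪(v : V), (v : V)⟫)
        / (⨅ v : {v : V // v ≠ 0}, ⟪ℬ (v : V), (v : V)⟫ / ⟪(v : V), (v : V)⟫))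
      * ((⨆ c : {c : EuclideanSpace ℝ (Fin n) // c ≠ 0},
            ⟪M (c : EuclideanSpace ℝ (Fin n)), (c : EuclideanSpace ℝ (Fin n))⟫
              / ⟪(c : EuclideanSpace ℝ (Fin n)), (c : EuclideanSpace ℝ (Fin n))⟫)
          / (⨅ c : {c : EuclideanSpace ℝ (Fin n) // c ≠ 0},
              ⟪M (c : EuclideanSpace ℝ (Fin n)), (c : EuclideanSpace ℝ (Fin n))⟫
                / ⟪(c : EuclideanSpace ℝ (Fin n)), (c : EuclideanSpace ℝ (Fin n))⟫)) := by
  classical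
  haveI : Nontrivial (EuclideanSpace ℝ (Fin n)) := τ.toEquiv.nontrivial
  haveI : Nonempty {v : V // v ≠ 0} := nonempty_subtype.mpr (exists_ne 0)
  haveI : Nonempty {c : EuclideanSpace ℝ (Fin n) // c ≠ 0} := nonempty_subtype.mpr (exists_ne 0)
  set S : V →ₗ[ℝ] EuclideanSpace ℝ (Fin n) := τ.symm.toLinearMap with hSdef
  set A : EuclideanSpace ℝ (Fin n) →ₗ[ℝ] V := LinearMap.adjoint S with hAdef
  set T : V →ₗ[ℝ] EuclideanSpace ℝ (Fin n) := LinearMap.adjoint τ.toLinearMap with hTdef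
  -- continuous versions for operator norms
  set τc : EuclideanSpace ℝ (Fin n) →L[ℝ] V := LinearMap.toContinuousLinearMap τ.toLinearMap with hτc
  set σc : V →L[ℝ] EuclideanSpace ℝ (Fin n) := LinearMap.toContinuousLinearMap S with hσc
  set ℬc : V →L[ℝ] V := LinearMap.toContinuousLinearMap ℬ with hℬc
  have hτapp : ∀ c : EuclideanSpace ℝ (Fin n), τc c = τ c := fun c => rfl
  have hσapp : ∀ v : V, σc v = τ.symm v := fun v => rfl
  have hℬapp : ∀ v : V, ℬc v = ℬ v := fun v => rfl
  clear_value S A T τc σc ℬc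
  -- basic identities
  have hTA : ∀ c : EuclideanSpace ℝ (Fin n), T (A c) = c := by
    intro c
    apply ext_inner_right ℝ
    intro w
    rw [hTdef, LinearMap.adjoint_inner_left, hAdef, LinearMap.adjoint_inner_left]
    simp [hSdef]
  have hAT : ∀ v : V, A (T v) = v := by
    intro v
    apply ext_inner_right ℝ
    intro w
    rw [hAdef, LinearMap.adjoint_inner_left, hTdef, LinearMap.adjoint_inner_left]
    simp [hSdef]
  have hAne : ∀ c : EuclideanSpace ℝ (Fin n), c ≠ 0 → A c ≠ 0 := by
    intro c hc h
    apply hc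
    rw [← hTA c, h, map_zero]
  have hBc : ∀ c : EuclideanSpace ℝ (Fin n), ⟪B c, c⟫ = ⟪ℬ (A c), A c⟫ := by
    intro c
    rw [hB]
    simp only [LinearMap.comp_apply]
    rw [← LinearMap.adjoint_inner_right S (ℬ (A c)) c, ← hAdef]
  have hMc : ∀ c : EuclideanSpace ℝ (Fin n), ⟪M c, c⟫ = ‖τ c‖ ^ 2 := by
    intro c
    rw [hM]
    simp only [LinearMap.comp_apply]
    rw [hTdef, LinearMap.adjoint_inner_left]
    exact real_inner_self_eq_norm_sq _
  -- norm bounds for A and T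
  have hAle : ∀ c : EuclideanSpace ℝ (Fin n), ‖A c‖ ≤ ‖σc‖ * ‖c‖ := by
    intro c
    rcases eq_or_ne (A c) 0 with h | h
    · rw [h, norm_zero]; positivity
    · have hpos : 0 < ‖A c‖ := norm_pos_iff.mpr h
      have h1 : ‖A c‖ ^ 2 = ⟪c, S (A c)⟫ := by
        rw [← real_inner_self_eq_norm_sq, hAdef, LinearMap.adjoint_inner_left]
      have h2 : ⟪c, S (A c)⟫ ≤ ‖c‖ * ‖S (A c)‖ := real_inner_le_norm _ _
      have h3 : ‖S (A c)‖ ≤ ‖σc‖ * ‖A c‖ := by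
        have := σc.le_opNorm (A c); rw [hσapp] at this; rw [hSdef]; exact this
      nlinarith [norm_nonneg c]
  have hTle : ∀ v : V, ‖T v‖ ≤ ‖τc‖ * ‖v‖ := by
    intro v
    rcases eq_or_ne (T v) 0 with h | h
    · rw [h, norm_zero]; positivity
    · have hpos : 0 < ‖T v‖ := norm_pos_iff.mpr h
      have h1 : ‖T v‖ ^ 2 = ⟪v, τ (T v)⟫ := by
        rw [← real_inner_self_eq_norm_sq, hTdef, LinearMap.adjoint_inner_left]
        rfl
      have h2 : ⟪v, τ (T v)⟫ ≤ ‖v‖ * ‖τ (T v)‖ := real_inner_le_norm _ _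
      have h3 : ‖τ (T v)‖ ≤ ‖τc‖ * ‖T v‖ := by
        have := τc.le_opNorm (T v); rwa [hτapp] at this
      nlinarith [norm_nonneg v]
  -- positivity of operator norms
  have hτcpos : 0 < ‖τc‖ := by
    rw [norm_pos_iff]
    intro h
    obtain ⟨v, hv⟩ := exists_ne (0 : V)
    apply hv
    have : τc (τ.symm v) = 0 := by rw [h]; rfl
    rw [hτapp] at this
    simpa using this
  have hσcpos : 0 < ‖σc‖ := by
    rw [norm_pos_iff]
    intro h
    obtain ⟨v, hv⟩ := exists_ne (0 : V)
    apply hv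
    have : σc v = 0 := by rw [h]; rfl
    rw [hσapp] at this
    have := congrArg τ this
    simpa using this
  -- Rayleigh quotient abbreviations
  set RB : {c : EuclideanSpace ℝ (Fin n) // c ≠ 0} → ℝ := fun c => ⟪B (c : EuclideanSpace ℝ (Fin n)), (c : EuclideanSpace ℝ (Fin n))⟫ / ⟪(c : EuclideanSpace ℝ (Fin n)), (c : EuclideanSpace ℝ (Fin n))⟫ with hRB
  set Rb : {v : V // v ≠ 0} → ℝ := fun v => ⟪ℬ (v : V), (v : V)⟫ / ⟪(v : V), (v : V)⟫ with hRb
  set RM : {c : EuclideanSpace ℝ (Fin n) // c ≠ 0} → ℝ := fun c => ⟪M (c : EuclideanSpace ℝ (Fin n)), (c : EuclideanSpace ℝ (Fin n))⟫ / ⟪(c : EuclideanSpace ℝ (Fin n)), (c : EuclideanSpace ℝ (Fin n))⟫ with hRM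
  have hinner_pos : ∀ {W : Type _} [NormedAddCommGroup W] [InnerProductSpace ℝ W]
      (w : W), w ≠ 0 → (0:ℝ) < ⟪w, w⟫ := by
    intro W _ _ w hw
    rw [real_inner_self_eq_norm_sq]
    exact pow_pos (norm_pos_iff.mpr hw) 2
  -- bounds for Rb
  obtain ⟨a, hapos, ha⟩ := pd_lower ℬ hpd
  have hRb_lb : ∀ v, a ≤ Rb v := fun v => ha v v.2
  have hRb_ub : ∀ v, Rb v ≤ ‖ℬc‖ := by
    intro ⟨v, hv⟩
    have hv2 : (0:ℝ) < ⟪v, v⟫ := hinner_pos v hv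
    rw [hRb, div_le_iff₀ hv2]
    calc ⟪ℬ v, v⟫ ≤ ‖ℬ v‖ * ‖v‖ := real_inner_le_norm _ _
      _ ≤ (‖ℬc‖ * ‖v‖) * ‖v‖ := by
          have := ℬc.le_opNorm v; rw [hℬapp] at this
          nlinarith [norm_nonneg v]
      _ = ‖ℬc‖ * ⟪v, v⟫ := by rw [real_inner_self_eq_norm_sq]; ring
  have hbddRb : BddAbove (Set.range Rb) := ⟨‖ℬc‖, by rintro x ⟨v, rfl⟩; exact hRb_ub v⟩
  have hbddRbb : BddBelow (Set.range Rb) := ⟨a, by rintro x ⟨v, rfl⟩; exact hRb_lb v⟩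
  set sb := ⨆ v, Rb v with hsb
  set ib := ⨅ v, Rb v with hib
  have hib_pos : 0 < ib := lt_of_lt_of_le hapos (le_ciInf hRb_lb)
  have hib_le : ∀ v, ib ≤ Rb v := fun v => ciInf_le hbddRbb v
  have hsb_ge : ∀ v, Rb v ≤ sb := fun v => le_ciSup hbddRb v
  have hsb_pos : 0 < sb := by
    obtain ⟨v, hv⟩ := exists_ne (0 : V)
    exact lt_of_lt_of_le (lt_of_lt_of_le hapos (hRb_lb ⟨v, hv⟩)) (hsb_ge ⟨v, hv⟩)
  -- RM facts
  have hRM_eq : ∀ c : {c : EuclideanSpace ℝ (Fin n) // c ≠ 0}, RM c = ‖τ (c : EuclideanSpace ℝ (Fin n))‖ ^ 2 / ‖(c : EuclideanSpace ℝ (Fin n))‖ ^ 2 := by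
    intro c
    rw [hRM]
    simp only
    rw [hMc, real_inner_self_eq_norm_sq]
  have hRM_ub : ∀ c, RM c ≤ ‖τc‖ ^ 2 := by
    intro c
    have hc : (0:ℝ) < ‖(c : EuclideanSpace ℝ (Fin n))‖ := norm_pos_iff.mpr c.2
    rw [hRM_eq, div_le_iff₀ (by positivity)]
    have := τc.le_opNorm (c : EuclideanSpace ℝ (Fin n))
    rw [hτapp] at this
    have h2 := pow_le_pow_left₀ (norm_nonneg (τ (c : EuclideanSpace ℝ (Fin n)))) this 2
    rw [mul_pow] at h2
    exact h2
  have hRM_lb : ∀ c, 1 / ‖σc‖ ^ 2 ≤ RM c := by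
    intro c
    have hc : (0:ℝ) < ‖(c : EuclideanSpace ℝ (Fin n))‖ := norm_pos_iff.mpr c.2
    have hτne : τ (c : EuclideanSpace ℝ (Fin n)) ≠ 0 := by
      intro h; apply c.2; have := congrArg τ.symm h; simpa using this
    have hτpos : (0:ℝ) < ‖τ (c : EuclideanSpace ℝ (Fin n))‖ := norm_pos_iff.mpr hτne
    rw [hRM_eq, div_le_div_iff₀ (by positivity) (by positivity)]
    have := σc.le_opNorm (τ (c : EuclideanSpace ℝ (Fin n)))
    rw [hσapp] at this
    simp only [LinearEquiv.symm_apply_apply] at this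
    have h2 := pow_le_pow_left₀ (norm_nonneg ((c : EuclideanSpace ℝ (Fin n)))) this 2
    rw [mul_pow] at h2
    linarith
  have hbddRM : BddAbove (Set.range RM) := ⟨‖τc‖ ^ 2, by rintro x ⟨c, rfl⟩; exact hRM_ub c⟩
  have hbddRMb : BddBelow (Set.range RM) := ⟨1 / ‖σc‖ ^ 2, by rintro x ⟨c, rfl⟩; exact hRM_lb c⟩
  set sM := ⨆ c, RM c with hsM
  set iM := ⨅ c, RM c with hiM
  have hiM_pos : 0 < iM := lt_of_lt_of_le (by positivity) (le_ciInf hRM_lb)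
  have hiM_le : ∀ c, iM ≤ RM c := fun c => ciInf_le hbddRMb c
  have hsM_ge : ∀ c, RM c ≤ sM := fun c => le_ciSup hbddRM c
  have hsM_pos : 0 < sM := by
    obtain ⟨c, hc⟩ := exists_ne (0 : EuclideanSpace ℝ (Fin n))
    exact lt_of_lt_of_le (lt_of_lt_of_le (by positivity) (hRM_lb ⟨c, hc⟩)) (hsM_ge ⟨c, hc⟩)
  -- ‖τc‖ ^ 2 ≤ sM
  have hτc_le : ‖τc‖ ^ 2 ≤ sM := by
    have hle : ‖τc‖ ≤ Real.sqrt sM := by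
      apply τc.opNorm_le_bound (Real.sqrt_nonneg _)
      intro c
      rcases eq_or_ne c 0 with rfl | hc
      · simp
      · have hnc : (0:ℝ) < ‖c‖ := norm_pos_iff.mpr hc
        have h1 := hsM_ge ⟨c, hc⟩
        rw [hRM_eq] at h1
        simp only at h1
        rw [div_le_iff₀ (by positivity)] at h1
        have h2 : ‖τc c‖ ^ 2 ≤ (Real.sqrt sM * ‖c‖) ^ 2 := by
          rw [mul_pow, Real.sq_sqrt hsM_pos.le]
          rw [hτapp]; linarith
        have h3 : (0:ℝ) ≤ Real.sqrt sM * ‖c‖ := by positivity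
        calc ‖τc c‖ = Real.sqrt (‖τc c‖ ^ 2) := (Real.sqrt_sq (norm_nonneg _)).symm
          _ ≤ Real.sqrt ((Real.sqrt sM * ‖c‖) ^ 2) := Real.sqrt_le_sqrt h2
          _ = Real.sqrt sM * ‖c‖ := Real.sqrt_sq h3
    calc ‖τc‖ ^ 2 ≤ Real.sqrt sM ^ 2 := pow_le_pow_left₀ (norm_nonneg _) hle 2
      _ = sM := Real.sq_sqrt hsM_pos.le
  -- ‖σc‖ ^ 2 ≤ 1 / iM
  have hσc_le : ‖σc‖ ^ 2 ≤ 1 / iM := by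
    have hle : ‖σc‖ ≤ 1 / Real.sqrt iM := by
      apply σc.opNorm_le_bound (by positivity)
      intro v
      rcases eq_or_ne v 0 with rfl | hv
      · simp
      · have hcne : σc v ≠ 0 := by
          rw [hσapp]
          intro h
          apply hv
          have := congrArg τ h
          simpa using this
        have h1 := hiM_le ⟨σc v, hcne⟩
        rw [hRM_eq] at h1
        simp only at h1
        have hτσ : τ ((⟨σc v, hcne⟩ : {c : EuclideanSpace ℝ (Fin n) // c ≠ 0}) : EuclideanSpace ℝ (Fin n)) = v := by
          simp [hσapp]
        rw [hτσ] at h1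
        have hσpos : (0:ℝ) < ‖σc v‖ := norm_pos_iff.mpr hcne
        rw [le_div_iff₀ (by positivity)] at h1
        have hs : (0:ℝ) < Real.sqrt iM := Real.sqrt_pos.mpr hiM_pos
        have h2 : ‖σc v‖ ^ 2 ≤ (1 / Real.sqrt iM * ‖v‖) ^ 2 := by
          rw [mul_pow, div_pow, one_pow, Real.sq_sqrt hiM_pos.le, div_mul_eq_mul_div,
            le_div_iff₀ hiM_pos]
          linarith
        have h3 : (0:ℝ) ≤ 1 / Real.sqrt iM * ‖v‖ := by positivity
        calc ‖σc v‖ = Real.sqrt (‖σc v‖ ^ 2) := (Real.sqrt_sq (norm_nonneg _)).symm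
          _ ≤ Real.sqrt ((1 / Real.sqrt iM * ‖v‖) ^ 2) := Real.sqrt_le_sqrt h2
          _ = 1 / Real.sqrt iM * ‖v‖ := Real.sqrt_sq h3
    have hs : (0:ℝ) < Real.sqrt iM := Real.sqrt_pos.mpr hiM_pos
    calc ‖σc‖ ^ 2 ≤ (1 / Real.sqrt iM) ^ 2 := pow_le_pow_left₀ (norm_nonneg _) hle 2
      _ = 1 / iM := by rw [div_pow, one_pow, Real.sq_sqrt hiM_pos.le]
  -- bounds on RB sup and inf
  have hRB_eq : ∀ c : {c : EuclideanSpace ℝ (Fin n) // c ≠ 0},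
      RB c = ⟪ℬ (A (c : EuclideanSpace ℝ (Fin n))), A (c : EuclideanSpace ℝ (Fin n))⟫ / ‖(c : EuclideanSpace ℝ (Fin n))‖ ^ 2 := by
    intro c
    rw [hRB]
    simp only
    rw [hBc, real_inner_self_eq_norm_sq]
  set sB := ⨆ c, RB c with hsB
  set iB := ⨅ c, RB c with hiB
  have hsB_le : sB ≤ sb * ‖σc‖ ^ 2 := by
    apply ciSup_le
    intro c
    have hc : (0:ℝ) < ‖(c : EuclideanSpace ℝ (Fin n))‖ := norm_pos_iff.mpr c.2
    set w : V := A (c : EuclideanSpace ℝ (Fin n)) with hw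
    have hAc : w ≠ 0 := hAne _ c.2
    have hApos : (0:ℝ) < ‖w‖ := norm_pos_iff.mpr hAc
    have h1 : ⟪ℬ w, w⟫ ≤ sb * ‖w‖ ^ 2 := by
      have := hsb_ge ⟨w, hAc⟩
      rw [hRb] at this
      simp only at this
      rw [div_le_iff₀ (hinner_pos _ hAc)] at this
      rw [← real_inner_self_eq_norm_sq]
      linarith
    have h2 : ‖w‖ ≤ ‖σc‖ * ‖(c : EuclideanSpace ℝ (Fin n))‖ := hAle _
    rw [hRB_eq, ← hw, div_le_iff₀ (by positivity)]
    have h4 := pow_le_pow_left₀ (norm_nonneg w) h2 2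
    rw [mul_pow] at h4
    have h5 : sb * ‖w‖ ^ 2 ≤ sb * (‖σc‖ ^ 2 * ‖(c : EuclideanSpace ℝ (Fin n))‖ ^ 2) :=
      mul_le_mul_of_nonneg_left h4 hsb_pos.le
    linarith
  have hiB_ge : ib / ‖τc‖ ^ 2 ≤ iB := by
    apply le_ciInf
    intro c
    have hc : (0:ℝ) < ‖(c : EuclideanSpace ℝ (Fin n))‖ := norm_pos_iff.mpr c.2
    set w : V := A (c : EuclideanSpace ℝ (Fin n)) with hw
    have hAc : w ≠ 0 := hAne _ c.2
    have hApos : (0:ℝ) < ‖w‖ := norm_pos_iff.mpr hAc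
    have h1 : ib * ‖w‖ ^ 2 ≤ ⟪ℬ w, w⟫ := by
      have := hib_le ⟨w, hAc⟩
      rw [hRb] at this
      simp only at this
      rw [le_div_iff₀ (hinner_pos _ hAc)] at this
      rw [← real_inner_self_eq_norm_sq]
      linarith
    have h2 : ‖(c : EuclideanSpace ℝ (Fin n))‖ ≤ ‖τc‖ * ‖w‖ := by
      have := hTle w
      rw [hw, hTA] at this
      exact this
    rw [hRB_eq, ← hw, div_le_div_iff₀ (by positivity) (by positivity)]
    have h4 := pow_le_pow_left₀ (norm_nonneg ((c : EuclideanSpace ℝ (Fin n)))) h2 2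
    rw [mul_pow] at h4
    have h5 : ib * ‖(c : EuclideanSpace ℝ (Fin n))‖ ^ 2 ≤ ib * (‖τc‖ ^ 2 * ‖w‖ ^ 2) :=
      mul_le_mul_of_nonneg_left h4 hib_pos.le
    have h6 : (ib * ‖w‖ ^ 2) * ‖τc‖ ^ 2 ≤ ⟪ℬ w, w⟫ * ‖τc‖ ^ 2 :=
      mul_le_mul_of_nonneg_right h1 (by positivity)
    linarith
  have hiB_pos : 0 < iB := lt_of_lt_of_le (by positivity) hiB_ge
  -- final assembly
  show sB / iB ≤ sb / ib * (sM / iM)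
  have step1 : sB / iB ≤ (sb * ‖σc‖ ^ 2) / (ib / ‖τc‖ ^ 2) := by
    apply div_le_div₀ (by positivity) hsB_le (by positivity) hiB_ge
  have step2 : (sb * ‖σc‖ ^ 2) / (ib / ‖τc‖ ^ 2) = sb / ib * (‖σc‖ ^ 2 * ‖τc‖ ^ 2) := by
    field_simp
  have step3 : ‖σc‖ ^ 2 * ‖τc‖ ^ 2 ≤ sM / iM := by
    rw [le_div_iff₀ hiM_pos]
    have h1 : ‖σc‖ ^ 2 * iM ≤ 1 := (le_div_iff₀ hiM_pos).mp hσc_le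
    have h2 : ‖τc‖ ^ 2 * (‖σc‖ ^ 2 * iM) ≤ ‖τc‖ ^ 2 * 1 :=
      mul_le_mul_of_nonneg_left h1 (sq_nonneg _)
    linarith
  calc sB / iB ≤ sb / ib * (‖σc‖ ^ 2 * ‖τc‖ ^ 2) := by rw [← step2]; exact step1
    _ ≤ sb / ib * (sM / iM) := by
        apply mul_le_mul_of_nonneg_left step3 (by positivity)
end

section
/- Let V be a nonzero finite-dimensional real inner product space, let τ : ℝᴺ → V be a surjective linear map with adjoint τ* : V → ℝᴺ, and let 𝒜 : V → V be a selfadjoint positive definite linear operator. Set A = τ* ∘ 𝒜 ∘ τ and M = τ* ∘ τ, and let K = (ker τ)^⊥ be the Euclidean orthogonal complement of ker(τ) in ℝᴺ. Then the condition number of the restriction of A to K satisfies (sup over nonzero c ∈ K of (Ac·c)/(c·c)) / (inf over nonzero c ∈ K of (Ac·c)/(c·c)) ≤ κ(𝒜) · [(sup over nonzero c ∈ K of (Mc·c)/(c·c)) / (inf over nonzero c ∈ K of (Mc·c)/(c·c))], where κ(𝒜) = (sup over nonzero v ∈ V of ⟨𝒜v,v⟩/⟨v,v⟩)/(inf over nonzero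 v ∈ V of ⟨𝒜v,v⟩/⟨v,v⟩). -/
open scoped RealInnerProductSpace

lemma aux_quad {E : Type*} [NormedAddCommGroup E] [InnerProductSpace ℝ E]
    [FiniteDimensional ℝ E] [Nontrivial E] (g : E → ℝ) (hg : Continuous g)
    (hh : ∀ (a : ℝ) (v : E), g (a • v) = a ^ 2 * g v) :
    ∃ m Mb : ℝ, (∃ u : E, u ≠ 0 ∧ g u / ⟪u, u⟫ = m) ∧
      ∀ v : E, v ≠ 0 → m ≤ g v / ⟪v, v⟫ ∧ g v / ⟪v, v⟫ ≤ Mb := by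
  have hsc : IsCompact (Metric.sphere (0:E) 1) := isCompact_sphere 0 1
  have hsne : (Metric.sphere (0:E) 1).Nonempty :=
    NormedSpace.sphere_nonempty.mpr zero_le_one
  obtain ⟨u₁, hu₁, hmin⟩ := hsc.exists_isMinOn hsne hg.continuousOn
  obtain ⟨u₂, hu₂, hmax⟩ := hsc.exists_isMaxOn hsne hg.continuousOn
  have hnu₁ : ‖u₁‖ = 1 := by simpa using hu₁
  have key : ∀ v : E, v ≠ 0 → g v / ⟪v, v⟫ = g (‖v‖⁻¹ • v) := by
    intro v hv
    rw [hh, real_inner_self_eq_norm_sq, inv_pow, div_eq_inv_mul]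
  refine ⟨g u₁, g u₂, ⟨u₁, ?_, ?_⟩, ?_⟩
  · intro h; rw [h] at hnu₁; simp at hnu₁
  · rw [real_inner_self_eq_norm_sq, hnu₁]; norm_num
  · intro v hv
    have h0 : ‖v‖ ≠ 0 := norm_ne_zero_iff.mpr hv
    have hmem : ‖v‖⁻¹ • v ∈ Metric.sphere (0:E) 1 := by
      simp [norm_smul, inv_mul_cancel₀ h0]
    rw [key v hv]
    exact ⟨hmin hmem, hmax hmem⟩

lemma inner_pos' {E : Type*} [NormedAddCommGroup E] [InnerProductSpace ℝ E]
    {x : E} (hx : x ≠ 0) : 0 < ⟪x, x⟫ :=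
  lt_of_le_of_ne real_inner_self_nonneg (Ne.symm (inner_self_ne_zero.mpr hx))


/-- Frame generalization of `κ(𝔸) ≤ κ(ℐ𝒜)κ(𝕄)`: for a surjective `τ : ℝᴺ → V`, with
stiffness matrix `A = τ*𝒜τ` and Gram matrix `M = τ*τ`, the condition number of the
restriction of `A` to `K = (ker τ)ᗮ` is bounded by `κ(𝒜)` times the condition number of
the restriction of `M` to `K`. -/
theorem stmt_16 {V : Type*} [NormedAddCommGroup V] [InnerProductSpace ℝ V]
    [FiniteDimensional ℝ V] [Nontrivial V] {N : ℕ}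
    (τ : EuclideanSpace ℝ (Fin N) →ₗ[ℝ] V) (hτ : Function.Surjective τ)
    (𝒜 : V →ₗ[ℝ] V)
    (hsa : ∀ u v : V, ⟪𝒜 u, v⟫ = ⟪u, 𝒜 v⟫)
    (hpd : ∀ v : V, v ≠ 0 → 0 < ⟪𝒜 v, v⟫)
    (A : EuclideanSpace ℝ (Fin N) →ₗ[ℝ] EuclideanSpace ℝ (Fin N))
    (hA : A = LinearMap.adjoint τ ∘ₗ 𝒜 ∘ₗ τ)
    (M : EuclideanSpace ℝ (Fin N) →ₗ[ℝ] EuclideanSpace ℝ (Fin N))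
    (hM : M = LinearMap.adjoint τ ∘ₗ τ) :
    (⨆ c : {c : (LinearMap.ker τ)ᗮ // c ≠ 0},
        ⟪A ((c : (LinearMap.ker τ)ᗮ) : EuclideanSpace ℝ (Fin N)),
            ((c : (LinearMap.ker τ)ᗮ) : EuclideanSpace ℝ (Fin N))⟫
          / ⟪((c : (LinearMap.ker τ)ᗮ) : EuclideanSpace ℝ (Fin N)),
              ((c : (LinearMap.ker τ)ᗮ) : EuclideanSpace ℝ (Fin N))⟫)
      / (⨅ c : {c : (LinearMap.ker τ)ᗮ // c ≠ 0},
          ⟪A ((c : (LinearMap.ker τ)ᗮ) : EuclideanSpace ℝ (Fin N)),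
              ((c : (LinearMap.ker τ)ᗮ) : EuclideanSpace ℝ (Fin N))⟫
            / ⟪((c : (LinearMap.ker τ)ᗮ) : EuclideanSpace ℝ (Fin N)),
                ((c : (LinearMap.ker τ)ᗮ) : EuclideanSpace ℝ (Fin N))⟫)
    ≤ ((⨆ v : {v : V // v ≠ 0}, ⟪𝒜 (v : V), (v : V)⟫ / ⟪(v : V), (v : V)⟫)
        / (⨅ v : {v : V // v ≠ 0}, ⟪𝒜 (v : V), (v : V)⟫ / ⟪(v : V), (v : V)⟫))
      * ((⨆ c : {c : (LinearMap.ker τ)ᗮ // c ≠ 0},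
            ⟪M ((c : (LinearMap.ker τ)ᗮ) : EuclideanSpace ℝ (Fin N)),
                ((c : (LinearMap.ker τ)ᗮ) : EuclideanSpace ℝ (Fin N))⟫
              / ⟪((c : (LinearMap.ker τ)ᗮ) : EuclideanSpace ℝ (Fin N)),
                  ((c : (LinearMap.ker τ)ᗮ) : EuclideanSpace ℝ (Fin N))⟫)
          / (⨅ c : {c : (LinearMap.ker τ)ᗮ // c ≠ 0},
              ⟪M ((c : (LinearMap.ker τ)ᗮ) : EuclideanSpace ℝ (Fin N)),
                  ((c : (LinearMap.ker τ)ᗮ) : EuclideanSpace ℝ (Fin N))⟫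
                / ⟪((c : (LinearMap.ker τ)ᗮ) : EuclideanSpace ℝ (Fin N)),
                    ((c : (LinearMap.ker τ)ᗮ) : EuclideanSpace ℝ (Fin N))⟫)) := by
  classical
  set K : Submodule ℝ (EuclideanSpace ℝ (Fin N)) := (LinearMap.ker τ)ᗮ with hKdef
  -- K is nontrivial
  obtain ⟨v₀, hv₀⟩ := exists_ne (0 : V)
  obtain ⟨x₀, hx₀⟩ := hτ v₀
  obtain ⟨y, hy, z, hz, hxyz⟩ :=
    Submodule.exists_add_mem_mem_orthogonal (K := LinearMap.ker τ) x₀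
  have hτz : τ z = v₀ := by
    have h1 : τ x₀ = τ y + τ z := by rw [hxyz]; simp
    have h2 : τ y = 0 := LinearMap.mem_ker.mp hy
    rw [hx₀, h2, zero_add] at h1; exact h1.symm
  have hz0 : z ≠ 0 := by rintro rfl; rw [map_zero] at hτz; exact hv₀ hτz.symm
  have : Nontrivial K :=
    nontrivial_of_ne ⟨z, hz⟩ 0 (by simpa [Submodule.mk_eq_zero] using hz0)
  have : Nonempty {c : K // c ≠ 0} := ⟨⟨Classical.choose (exists_ne (0:K)),
    Classical.choose_spec (exists_ne (0:K))⟩⟩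
  have : Nonempty {v : V // v ≠ 0} := ⟨⟨v₀, hv₀⟩⟩
  -- coercion facts
  have hcK : ∀ c : {c : K // c ≠ 0}, ((c : K) : EuclideanSpace ℝ (Fin N)) ≠ 0 := by
    intro c h
    exact c.2 (by ext1; exact h)
  have hτK : ∀ c : {c : K // c ≠ 0}, τ ((c : K) : EuclideanSpace ℝ (Fin N)) ≠ 0 := by
    intro c h
    have hker : ((c : K) : EuclideanSpace ℝ (Fin N)) ∈ LinearMap.ker τ :=
      LinearMap.mem_ker.mpr h
    have h0 : ⟪((c : K) : EuclideanSpace ℝ (Fin N)), ((c : K) : EuclideanSpace ℝ (Fin N))⟫ = 0 :=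
      (Submodule.mem_orthogonal _ _).mp (c : K).2 _ hker
    exact hcK c (inner_self_eq_zero.mp h0)
  -- inner identities
  have hAin : ∀ c : EuclideanSpace ℝ (Fin N), ⟪A c, c⟫ = ⟪𝒜 (τ c), τ c⟫ := by
    intro c; rw [hA]; simp [LinearMap.adjoint_inner_left]
  have hMin : ∀ c : EuclideanSpace ℝ (Fin N), ⟪M c, c⟫ = ⟪τ c, τ c⟫ := by
    intro c; rw [hM]; simp [LinearMap.adjoint_inner_left]
  -- V-side bounds
  obtain ⟨αV, βV, ⟨uV, huV0, huVval⟩, hVb⟩ :=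
    aux_quad (fun v : V => ⟪𝒜 v, v⟫)
      (Continuous.inner 𝒜.continuous_of_finiteDimensional continuous_id)
      (by intro a v; simp [real_inner_smul_left, real_inner_smul_right]; ring)
  have hαV : 0 < αV := by
    rw [← huVval]
    exact div_pos (hpd uV huV0) (inner_pos' huV0)
  set qV : {v : V // v ≠ 0} → ℝ := fun v => ⟪𝒜 (v : V), (v : V)⟫ / ⟪(v : V), (v : V)⟫
    with hqVdef
  have hVub : BddAbove (Set.range qV) :=
    ⟨βV, Set.forall_mem_range.mpr fun v => (hVb v.1 v.2).2⟩
  have hVlb : BddBelow (Set.range qV) :=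
    ⟨αV, Set.forall_mem_range.mpr fun v => (hVb v.1 v.2).1⟩
  have hiV : 0 < ⨅ v, qV v :=
    lt_of_lt_of_le hαV (le_ciInf fun v => (hVb v.1 v.2).1)
  obtain ⟨v1⟩ := (inferInstance : Nonempty {v : V // v ≠ 0})
  have hiVsV : (⨅ v, qV v) ≤ ⨆ v, qV v := (ciInf_le hVlb v1).trans (le_ciSup hVub v1)
  have hsVpos : 0 < ⨆ v, qV v := lt_of_lt_of_le hiV hiVsV
  -- M-side bounds (on K)
  have hcoe : Continuous (fun c : K => (c : EuclideanSpace ℝ (Fin N))) :=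
    continuous_subtype_val
  obtain ⟨αM, βM, ⟨uM, huM0, huMval⟩, hMb⟩ :=
    aux_quad (fun c : K => ⟪M (c : EuclideanSpace ℝ (Fin N)), (c : EuclideanSpace ℝ (Fin N))⟫)
      (Continuous.inner (M.continuous_of_finiteDimensional.comp hcoe) hcoe)
      (by
        intro a c
        simp only [Submodule.coe_smul, map_smul, real_inner_smul_left, real_inner_smul_right]
        ring)
  set qM : {c : K // c ≠ 0} → ℝ := fun c =>
    ⟪M ((c : K) : EuclideanSpace ℝ (Fin N)), ((c : K) : EuclideanSpace ℝ (Fin N))⟫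
      / ⟪((c : K) : EuclideanSpace ℝ (Fin N)), ((c : K) : EuclideanSpace ℝ (Fin N))⟫
    with hqMdef
  have hMb' : ∀ c : {c : K // c ≠ 0}, αM ≤ qM c ∧ qM c ≤ βM := by
    intro c
    have := hMb (c : K) c.2
    rwa [Submodule.coe_inner] at this
  have huM0' : ((uM : K) : EuclideanSpace ℝ (Fin N)) ≠ 0 := by
    intro h; exact huM0 (by ext1; exact h)
  have hαM : 0 < αM := by
    rw [← huMval, Submodule.coe_inner]
    refine div_pos ?_ (inner_pos' huM0')
    rw [hMin]
    refine inner_pos' ?_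
    intro h
    have hker : ((uM : K) : EuclideanSpace ℝ (Fin N)) ∈ LinearMap.ker τ :=
      LinearMap.mem_ker.mpr h
    have h0 : ⟪((uM : K) : EuclideanSpace ℝ (Fin N)), ((uM : K) : EuclideanSpace ℝ (Fin N))⟫ = 0 :=
      (Submodule.mem_orthogonal _ _).mp uM.2 _ hker
    exact huM0' (inner_self_eq_zero.mp h0)
  have hMub : BddAbove (Set.range qM) :=
    ⟨βM, Set.forall_mem_range.mpr fun c => (hMb' c).2⟩
  have hMlb : BddBelow (Set.range qM) :=
    ⟨αM, Set.forall_mem_range.mpr fun c => (hMb' c).1⟩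
  have hiM : 0 < ⨅ c, qM c :=
    lt_of_lt_of_le hαM (le_ciInf fun c => (hMb' c).1)
  -- A-side quotient
  set qA : {c : K // c ≠ 0} → ℝ := fun c =>
    ⟪A ((c : K) : EuclideanSpace ℝ (Fin N)), ((c : K) : EuclideanSpace ℝ (Fin N))⟫
      / ⟪((c : K) : EuclideanSpace ℝ (Fin N)), ((c : K) : EuclideanSpace ℝ (Fin N))⟫
    with hqAdef
  -- key factorization
  have hfact : ∀ c : {c : K // c ≠ 0},
      qA c = qV ⟨τ ((c : K) : EuclideanSpace ℝ (Fin N)), hτK c⟩ * qM c := by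
    intro c
    set w := τ ((c : K) : EuclideanSpace ℝ (Fin N)) with hw
    have hw0 : ⟪w, w⟫ ≠ 0 := ne_of_gt (inner_pos' (hτK c))
    have hc0 : ⟪((c : K) : EuclideanSpace ℝ (Fin N)), ((c : K) : EuclideanSpace ℝ (Fin N))⟫ ≠ 0 :=
      ne_of_gt (inner_pos' (hcK c))
    simp only [hqAdef, hqVdef, hqMdef, hAin, hMin]
    field_simp
    exact (mul_div_cancel_right₀ _ hw0).symm
  have hqMpos : ∀ c : {c : K // c ≠ 0}, 0 < qM c := fun c =>
    lt_of_lt_of_le hαM (hMb' c).1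
  -- sup and inf bounds for qA
  have hsupA : (⨆ c, qA c) ≤ (⨆ v, qV v) * ⨆ c, qM c := by
    refine ciSup_le fun c => ?_
    rw [hfact c]
    have h1 : qV ⟨τ ((c : K) : EuclideanSpace ℝ (Fin N)), hτK c⟩ ≤ ⨆ v, qV v :=
      le_ciSup hVub _
    have h2 : qM c ≤ ⨆ c, qM c := le_ciSup hMub _
    have h3 : 0 < qV ⟨τ ((c : K) : EuclideanSpace ℝ (Fin N)), hτK c⟩ :=
      lt_of_lt_of_le hαV (hVb _ (hτK c)).1
    exact mul_le_mul h1 h2 (le_of_lt (hqMpos c)) (le_of_lt hsVpos)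
  have hinfA : (⨅ v, qV v) * (⨅ c, qM c) ≤ ⨅ c, qA c := by
    refine le_ciInf fun c => ?_
    rw [hfact c]
    have h1 : (⨅ v, qV v) ≤ qV ⟨τ ((c : K) : EuclideanSpace ℝ (Fin N)), hτK c⟩ :=
      ciInf_le hVlb _
    have h2 : (⨅ c, qM c) ≤ qM c := ciInf_le hMlb _
    exact mul_le_mul h1 h2 (le_of_lt hiM) (le_of_lt (lt_of_lt_of_le hαV (hVb _ (hτK c)).1))
  obtain ⟨c1⟩ := (inferInstance : Nonempty {c : K // c ≠ 0})
  calc (⨆ c, qA c) / ⨅ c, qA c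
      ≤ ((⨆ v, qV v) * ⨆ c, qM c) / ((⨅ v, qV v) * ⨅ c, qM c) :=
        div_le_div₀ (mul_nonneg (le_of_lt hsVpos)
            (le_of_lt (lt_of_lt_of_le hiM ((ciInf_le hMlb c1).trans (le_ciSup hMub c1)))))
          hsupA (mul_pos hiV hiM) hinfA
    _ = ((⨆ v, qV v) / ⨅ v, qV v) * ((⨆ c, qM c) / ⨅ c, qM c) :=
        (div_mul_div_comm _ _ _ _).symm
end
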